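/- arXiv:2504.15949 — 7 statements merged into one kernel-verified Lean document; each statement's English description precedes it below -/
import Mathlib

section
/- Let p be a prime with p ≥ 3, let d ≥ 0, and let f : (ZMod p)^{d+1} → ZMod p be a totally separated local rule, i.e. f(x_1,…,x_{d+1}) = Σ_{i=1}^{d+1} a_i x_i^{q_i} with a_i ∈ ZMod p. If every exponent q_i is a positive even integer, then the global map F of the cellular automaton with local rule f is not surjective. -/
/-- The global map of the cellular automaton over `ZMod m` with diameter `d`
and local rule `f : (ZMod m)^{d+1} → ZMod m`:
`F(x)_i = f(x_i, x_{i+1}, …, x_{i+d})`. -/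
def globalMap (m d : ℕ) (f : (Fin (d + 1) → ZMod m) → ZMod m)
    (x : ℤ → ZMod m) : ℤ → ZMod m :=
  fun i => f fun k => x (i + ((k : ℕ) : ℤ))

/-- There is an `n` with `(p-1)^(n+d) < p^n`, for `p ≥ 2`. -/
lemma exists_pow_lt_pow (p d : ℕ) (hp : 2 ≤ p) : ∃ n : ℕ, (p - 1) ^ (n + d) < p ^ n := by
  have hp1 : (1 : ℝ) ≤ (p : ℝ) - 1 := by
    have : (2 : ℝ) ≤ (p : ℝ) := by exact_mod_cast hp
    linarith
  have hpos : (0 : ℝ) < (p : ℝ) - 1 := by linarith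
  have hone : (1 : ℝ) < (p : ℝ) / ((p : ℝ) - 1) := by
    rw [lt_div_iff₀ hpos]; linarith
  obtain ⟨n, hn⟩ := pow_unbounded_of_one_lt (((p : ℝ) - 1) ^ d) hone
  refine ⟨n, ?_⟩
  have key : ((p : ℝ) - 1) ^ (n + d) < (p : ℝ) ^ n := by
    have h2 : ((p : ℝ) - 1) ^ d * ((p : ℝ) - 1) ^ n
        < ((p : ℝ) / ((p : ℝ) - 1)) ^ n * ((p : ℝ) - 1) ^ n :=
      mul_lt_mul_of_pos_right hn (pow_pos hpos n)
    have h3 : ((p : ℝ) / ((p : ℝ) - 1)) ^ n * ((p : ℝ) - 1) ^ n = (p : ℝ) ^ n := by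
      rw [← mul_pow, div_mul_cancel₀]
      exact ne_of_gt hpos
    rw [pow_add, mul_comm]
    rw [h3] at h2
    exact h2
  have hcast : ((p - 1 : ℕ) : ℝ) = (p : ℝ) - 1 := by
    have : (1 : ℕ) ≤ p := by omega
    push_cast [this]
    ring
  have : ((p - 1 : ℕ) : ℝ) ^ (n + d) < ((p : ℕ) : ℝ) ^ n := by rw [hcast]; exact key
  exact_mod_cast this

/-- Let `p` be a prime with `p ≥ 3`, let `d ≥ 0`, and let `f` be a totally
separated local rule `f(x_1,…,x_{d+1}) = Σ_i a_i x_i ^ q_i`.  If every exponent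
`q_i` is a positive even integer, then the global map of the CA with local rule
`f` is not surjective. -/
theorem totallySeparated_even_exponents_not_surjective
    (p : ℕ) (hp : p.Prime) (hp3 : 3 ≤ p) (d : ℕ)
    (a : Fin (d + 1) → ZMod p) (q : Fin (d + 1) → ℕ)
    (hq_pos : ∀ i, 0 < q i) (hq_even : ∀ i, Even (q i))
    (f : (Fin (d + 1) → ZMod p) → ZMod p)
    (hf : ∀ x, f x = ∑ i, a i * x i ^ q i) :
    ¬ Function.Surjective (globalMap p d f) := by
  intro hsurj
  haveI : Fact p.Prime := ⟨hp⟩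
  haveI : NeZero p := ⟨hp.ne_zero⟩
  -- there is a nonsquare in ZMod p
  obtain ⟨c, hc⟩ : ∃ c : ZMod p, ¬ IsSquare c := by
    apply FiniteField.exists_nonsquare
    rw [ZMod.ringChar_zmod_n]
    omega
  have hcard : Fintype.card {x : ZMod p // IsSquare x} < p := by
    have h := Fintype.card_subtype_lt (p := fun x : ZMod p => IsSquare x) (x := c) hc
    rwa [ZMod.card] at h
  have hcard' : Fintype.card {x : ZMod p // IsSquare x} ≤ p - 1 := by omega
  obtain ⟨n, hn⟩ := exists_pow_lt_pow p d hp.two_le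
  -- the finite-window map, through squares
  have hidx : ∀ (i : Fin n) (k : Fin (d + 1)), i.val + k.val < n + d := by
    intro i k
    have := i.isLt
    have := k.isLt
    omega
  set H : (Fin (n + d) → {x : ZMod p // IsSquare x}) → (Fin n → ZMod p) :=
    fun v i => ∑ k : Fin (d + 1),
      a k * (v ⟨i.val + k.val, hidx i k⟩ : ZMod p) ^ (q k / 2) with hH
  have hHsurj : Function.Surjective H := by
    intro y
    obtain ⟨x, hx⟩ := hsurj (fun i : ℤ =>
      if h : 0 ≤ i ∧ i < n then y ⟨i.toNat, by omega⟩ else 0)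
    refine ⟨fun j => ⟨x ((j : ℕ) : ℤ) ^ 2, ⟨x ((j : ℕ) : ℤ), (pow_two _)⟩⟩, ?_⟩
    funext i
    have hxi := congrFun hx ((i : ℕ) : ℤ)
    have hcond : (0 : ℤ) ≤ ((i : ℕ) : ℤ) ∧ ((i : ℕ) : ℤ) < n := by
      constructor
      · positivity
      · exact_mod_cast i.isLt
    rw [dif_pos hcond] at hxi
    have htoNat : (((i : ℕ) : ℤ)).toNat = (i : ℕ) := Int.toNat_natCast _
    have hyi : y ⟨(((i : ℕ) : ℤ)).toNat, by omega⟩ = y i := rfl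
    rw [hyi] at hxi
    rw [hH]
    simp only
    rw [← hxi]
    rw [globalMap, hf]
    apply Finset.sum_congr rfl
    intro k _
    congr 1
    have h2 : 2 * (q k / 2) = q k := Nat.mul_div_cancel' ((hq_even k).two_dvd)
    rw [← pow_mul, h2]
    have harg : (((i : ℕ) + (k : ℕ) : ℕ) : ℤ) = ((i : ℕ) : ℤ) + ((k : ℕ) : ℤ) := by
      push_cast; ring
    rw [harg]
  have hle := Fintype.card_le_of_surjective H hHsurj
  rw [Fintype.card_fun, Fintype.card_fun, ZMod.card, Fintype.card_fin, Fintype.card_fin] at hle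
  have hle2 : Fintype.card {x : ZMod p // IsSquare x} ^ (n + d) ≤ (p - 1) ^ (n + d) :=
    Nat.pow_le_pow_left hcard' _
  omega
end

section
/- Let p be a prime with p ≥ 3 and let d ≥ 0. If the local rule f : (ZMod p)^{d+1} → ZMod p is a quadratic form on the (ZMod p)-module (ZMod p)^{d+1} (i.e. f(a • u) = a² · f(u) for all scalars a and vectors u, and the polar map (u,v) ↦ f(u+v) − f(u) − f(v) is bilinear), then the global map F of the cellular automaton with local rule f is not surjective. In particular, there is no surjective quadratic cellular automaton over ZMod p. -/
/- ### Auxiliary arithmetic lemmas -/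

lemma QCA.binom_aux (a n : ℕ) : a^(n+1) + (n+1)*a^n ≤ (a+1)^(n+1) := by
  induction n with
  | zero => simp
  | succ n ih =>
    have h : (a+1)*(a^(n+1) + (n+1)*a^n) = a^(n+2) + (n+2)*a^(n+1) + (n+1)*a^n := by ring
    calc a^(n+2) + (n+2)*a^(n+1) ≤ a^(n+2) + (n+2)*a^(n+1) + (n+1)*a^n := Nat.le_add_right _ _
    _ = (a+1)*(a^(n+1) + (n+1)*a^n) := h.symm
    _ ≤ (a+1)*(a+1)^(n+1) := Nat.mul_le_mul_left _ ih
    _ = (a+1)^(n+2) := by ring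

lemma QCA.two_mul_pow (m : ℕ) : 2*m^(m+1) ≤ (m+1)^(m+1) := by
  have h := QCA.binom_aux m m
  have h2 : 2*m^(m+1) ≤ m^(m+1) + (m+1)*m^m := by
    have e : 2*m^(m+1) = m^(m+1) + m^m * m := by ring
    rw [e]
    have : m^m * m ≤ (m+1)*m^m := by
      rw [mul_comm]; exact Nat.mul_le_mul_right _ (Nat.le_succ m)
    omega
  omega

lemma QCA.pow_gap (m s : ℕ) : 2^s * m^((m+1)*s) ≤ (m+1)^((m+1)*s) := by
  calc 2^s * m^((m+1)*s) = (2*m^(m+1))^s := by rw [mul_pow, ← pow_mul]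
  _ ≤ ((m+1)^(m+1))^s := Nat.pow_le_pow_left (QCA.two_mul_pow m) s
  _ = (m+1)^((m+1)*s) := by rw [← pow_mul]

lemma QCA.divmod (d b s : ℕ) (hs : s < 2*d+1) :
    (b*(2*d+1)+s)/(2*d+1) = b ∧ (b*(2*d+1)+s) % (2*d+1) = s := by
  constructor
  · rw [Nat.mul_comm b, Nat.mul_add_div (by omega), Nat.div_eq_of_lt hs]; omega
  · rw [Nat.mul_comm b, Nat.mul_add_mod, Nat.mod_eq_of_lt hs]

lemma QCA.block_unique {d b b' s s' : ℕ} (hs : s < 2*d+1) (hs' : s' < 2*d+1)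
    (h : b*(2*d+1)+s = b'*(2*d+1)+s') : b = b' ∧ s = s' := by
  have h1 := QCA.divmod d b s hs
  have h2 := QCA.divmod d b' s' hs'
  rw [h] at h1
  exact ⟨h1.1.symm.trans h2.1, h1.2.symm.trans h2.2⟩

/- ### The block-replacement argument -/

/-- The special block value: `-1` in the middle, zero elsewhere. -/
def QCA.vN (p d : ℕ) : ℕ → ZMod p := fun r => if r = d then -1 else 0

/-- `x` has a `v`-block at block position `b`. -/
def QCA.isV (p d : ℕ) (x : ℕ → ZMod p) (b : ℕ) : Prop :=
  ∀ r < 2*d+1, x (b*(2*d+1)+r) = QCA.vN p d r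

open Classical in
/-- Replace the middle of each `v`-block by `1` (turning `-u` blocks into `u` blocks). -/
noncomputable def QCA.gg (p d : ℕ) (x : ℕ → ZMod p) : ℕ → ZMod p :=
  fun j => if ∃ b, j = b*(2*d+1)+d ∧ QCA.isV p d x b then 1 else x j

/-- Block version of the global map, on one-sided infinite words. -/
def QCA.fnat (p d : ℕ) (f : (Fin (d+1) → ZMod p) → ZMod p) (x : ℕ → ZMod p) : ℕ → ZMod p :=
  fun i => f fun r => x (i + r)

namespace QCA

lemma not_isV_gg {p d : ℕ} (h1 : (1 : ZMod p) ≠ -1) (x : ℕ → ZMod p) (b : ℕ) :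
    ¬ isV p d (gg p d x) b := by
  intro h
  by_cases hb : isV p d x b
  · have hd := h d (by omega)
    rw [gg] at hd
    rw [if_pos ⟨b, rfl, hb⟩, vN, if_pos rfl] at hd
    exact h1 hd
  · apply hb
    intro r hr
    have hd := h r hr
    rw [gg] at hd
    rw [if_neg ?_] at hd
    · exact hd
    · rintro ⟨b', he, hvb'⟩
      obtain ⟨hbb, hrd⟩ := block_unique hr (show d < 2*d+1 by omega) he
      exact hb (hbb ▸ hvb')

lemma fnat_gg {p d : ℕ} (f : (Fin (d+1) → ZMod p) → ZMod p)
    (hf : ∀ w, f (-w) = f w) (x : ℕ → ZMod p) (i : ℕ) :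
    fnat p d f (gg p d x) i = fnat p d f x i := by
  by_cases hc : ∃ b s, s ≤ d ∧ i = b*(2*d+1)+s ∧ isV p d x b
  · obtain ⟨b, s, hsd, hi, hv⟩ := hc
    have hw : (fun r : Fin (d+1) => gg p d x (i + r)) = - fun r : Fin (d+1) => x (i + r) := by
      funext r
      have hr : (r:ℕ) ≤ d := by omega
      have hp' : i + (r:ℕ) = b*(2*d+1) + (s + r) := by omega
      show gg p d x (i + r) = -(x (i + r))
      rw [hp']
      have hsr : s + (r:ℕ) < 2*d+1 := by omega
      have hx : x (b*(2*d+1)+(s+r)) = vN p d (s+r) := hv _ hsr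
      by_cases h' : s + (r:ℕ) = d
      · rw [gg, if_pos ⟨b, by omega, hv⟩, hx, vN, if_pos h', neg_neg]
      · have hne : ¬ ∃ b', b*(2*d+1)+(s+(r:ℕ)) = b'*(2*d+1)+d ∧ isV p d x b' := by
          rintro ⟨b', he, hvb'⟩
          obtain ⟨hbb, hrd⟩ := block_unique hsr (show d < 2*d+1 by omega) he
          exact h' hrd
        rw [gg, if_neg hne, hx, vN, if_neg h', neg_zero]
    show f _ = f _
    rw [hw]
    exact hf _
  · show f _ = f _
    congr 1
    funext r
    show gg p d x (i + r) = x (i + r)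
    rw [gg, if_neg ?_]
    rintro ⟨b', he, hvb'⟩
    exact hc ⟨b', d - (r:ℕ), by omega, by omega, hvb'⟩

lemma block_surj {p d : ℕ} (f : (Fin (d+1) → ZMod p) → ZMod p)
    (hs : Function.Surjective (globalMap p d f)) (n : ℕ) (w : Fin n → ZMod p) :
    ∃ x : ℕ → ZMod p, ∀ i : Fin n, fnat p d f x i = w i := by
  classical
  obtain ⟨x, hx⟩ := hs (fun i : ℤ => if h : 0 ≤ i ∧ i < (n:ℤ) then w ⟨i.toNat, by omega⟩ else 0)
  refine ⟨fun j => x j, fun i => ?_⟩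
  have h := congrFun hx (i : ℤ)
  rw [globalMap] at h
  rw [dif_pos ⟨Int.natCast_nonneg _, by exact_mod_cast i.isLt⟩] at h
  have hfi : (⟨((i:ℕ):ℤ).toNat, by omega⟩ : Fin n) = i := by
    ext; simp
  rw [hfi] at h
  rw [← h]
  simp only [fnat]
  congr 1

/-- Assembled-word type: `k` non-`v` blocks plus a tail of length `d`. -/
abbrev asmT (p d k : ℕ) :=
  (Fin k → {b : Fin (2*d+1) → ZMod p // b ≠ fun r : Fin (2*d+1) => vN p d r}) × (Fin d → ZMod p)

noncomputable def asm (p d k : ℕ) (t : asmT p d k) : ℕ → ZMod p := fun j =>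
  if hj : j < k*(2*d+1) then
    (t.1 ⟨j/(2*d+1), (Nat.div_lt_iff_lt_mul (by omega)).mpr hj⟩).1 ⟨j % (2*d+1), Nat.mod_lt _ (by omega)⟩
  else if hj2 : j - k*(2*d+1) < d then t.2 ⟨j - k*(2*d+1), hj2⟩ else 0

lemma asm_spec (p d k : ℕ) (x : ℕ → ZMod p) (hx : ∀ b < k, ¬ isV p d x b) :
    ∃ t : asmT p d k, ∀ j < k*(2*d+1)+d, asm p d k t j = x j := by
  refine ⟨(fun b => ⟨fun r => x ((b:ℕ)*(2*d+1)+r), ?_⟩, fun s => x (k*(2*d+1)+s)), ?_⟩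
  · intro he
    apply hx b b.isLt
    intro r hr
    exact congrFun he ⟨r, hr⟩
  · intro j hj
    rw [asm]
    by_cases hj1 : j < k*(2*d+1)
    · rw [dif_pos hj1]
      show x _ = x j
      congr 1
      rw [Nat.mul_comm (j/(2*d+1)) (2*d+1)]
      exact Nat.div_add_mod j (2*d+1)
    · rw [dif_neg hj1, dif_pos (by omega)]
      show x (k*(2*d+1) + (j - k*(2*d+1))) = x j
      congr 1
      omega

lemma card_asmT (p d k : ℕ) [NeZero p] :
    Fintype.card (asmT p d k) = (p^(2*d+1)-1)^k * p^d := by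
  rw [Fintype.card_prod, Fintype.card_fun, Fintype.card_fun]
  rw [Fintype.card_subtype_compl]
  simp [ZMod.card]

end QCA

/-- Let `p` be a prime with `p ≥ 3` and `d ≥ 0`.  If the local rule is a
quadratic form on `(ZMod p)^{d+1}`, then the global map of the associated
cellular automaton is not surjective: there is no surjective quadratic CA over
`ZMod p`. -/
theorem quadratic_CA_not_surjective
    (p : ℕ) (hp : p.Prime) (hp3 : 3 ≤ p) (d : ℕ)
    (Q : QuadraticForm (ZMod p) (Fin (d + 1) → ZMod p)) :
    ¬ Function.Surjective (globalMap p d fun x => Q x) := by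
  intro hs
  haveI : NeZero p := ⟨by omega⟩
  set f : (Fin (d+1) → ZMod p) → ZMod p := fun x => Q x with hf_def
  have hQneg : ∀ w, f (-w) = f w := fun w => QuadraticMap.map_neg Q w
  have h1 : (1 : ZMod p) ≠ -1 := by
    intro h
    have h2 : ((2:ℕ) : ZMod p) = 0 := by push_cast; linear_combination h
    rw [ZMod.natCast_eq_zero_iff] at h2
    have := Nat.le_of_dvd (by norm_num) h2
    omega
  -- parameters
  have hM1 : 1 ≤ p^(2*d+1) := Nat.one_le_pow _ _ (by omega)
  set m := p^(2*d+1) - 1 with hm_def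
  set s := p^d with hs_def
  set k := (m+1)*s with hk_def
  set n := k*(2*d+1) with hn_def
  -- the assembled map is surjective onto all n-blocks
  have hΦ : Function.Surjective
      (fun t : QCA.asmT p d k => fun i : Fin n => QCA.fnat p d f (QCA.asm p d k t) i) := by
    intro w
    obtain ⟨x, hxw⟩ := QCA.block_surj f hs n w
    have hx1w : ∀ i : Fin n, QCA.fnat p d f (QCA.gg p d x) i = w i :=
      fun i => (QCA.fnat_gg f hQneg x i).trans (hxw i)
    have hnoV : ∀ b < k, ¬ QCA.isV p d (QCA.gg p d x) b :=
      fun b _ => QCA.not_isV_gg h1 x b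
    obtain ⟨t, ht⟩ := QCA.asm_spec p d k (QCA.gg p d x) hnoV
    refine ⟨t, funext fun i => ?_⟩
    show QCA.fnat p d f (QCA.asm p d k t) i = w i
    rw [← hx1w i]
    show f _ = f _
    congr 1
    funext r
    exact ht ((i:ℕ) + r) (by omega)
  have hcard := Fintype.card_le_of_surjective _ hΦ
  rw [QCA.card_asmT] at hcard
  have hfun : Fintype.card (Fin n → ZMod p) = p^n := by
    simp [ZMod.card]
  rw [hfun] at hcard
  -- final arithmetic contradiction
  have e1 : p^n = (m+1)^k := by
    rw [hn_def, mul_comm k, pow_mul]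
    congr 1
    omega
  have hm2 : 2 ≤ m := by
    have : p ≤ p^(2*d+1) := Nat.le_self_pow (by omega) p
    omega
  have hps : p^d < 2^s := by
    rw [hs_def]; exact Nat.lt_two_pow_self
  have e3 : (p^(2*d+1)-1)^k * p^d < m^k * 2^s := by
    rw [← hm_def]
    have hpos : 0 < m^k := pow_pos (by omega) _
    exact Nat.mul_lt_mul_of_le_of_lt (le_refl _) hps hpos
  have e4 : m^k * 2^s ≤ (m+1)^k := by
    rw [hk_def]
    calc m^((m+1)*s) * 2^s = 2^s * m^((m+1)*s) := by ring
    _ ≤ (m+1)^((m+1)*s) := QCA.pow_gap m s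
  rw [e1] at hcard
  omega
end

section
/- Let p be a prime with p ≥ 3, let d ≥ 0, and let f : (ZMod p)^{d+1} → ZMod p be a totally separated local rule, i.e. f(x_1,…,x_{d+1}) = Σ_{i=1}^{d+1} a_i x_i^{q_i} with a_i ∈ ZMod p. If every exponent q_i is a positive even integer, then the global map F of the cellular automaton with local rule f is not injective. -/
section

variable {m d : ℕ} {f : (Fin (d + 1) → ZMod m) → ZMod m}

theorem globalMap_neg (hf : ∀ x, f (-x) = f x) (x : ℤ → ZMod m) :
    globalMap m d f (-x) = globalMap m d f x :=
  funext fun _ => hf _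

theorem not_injective_globalMap_of_neg_invariant (hf : ∀ x, f (-x) = f x)
    (hm : (-1 : ZMod m) ≠ 1) : ¬ Function.Injective (globalMap m d f) :=
  fun hinj => hm (congrFun (hinj (globalMap_neg hf 1)) 0)

end

theorem Finset.sum_mul_neg_pow_of_even {R ι : Type*} [Ring R] [Fintype ι] (a : ι → R)
    {q : ι → ℕ} (hq : ∀ i, Even (q i)) (x : ι → R) :
    ∑ i, a i * (-x) i ^ q i = ∑ i, a i * x i ^ q i :=
  Finset.sum_congr rfl fun i _ => by rw [Pi.neg_apply, (hq i).neg_pow]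

theorem totallySeparated_even_exponents_not_injective_general
    (p : ℕ) (hp3 : 3 ≤ p) (d : ℕ)
    (a : Fin (d + 1) → ZMod p) (q : Fin (d + 1) → ℕ)
    (hq_even : ∀ i, Even (q i))
    (f : (Fin (d + 1) → ZMod p) → ZMod p)
    (hf : ∀ x, f x = ∑ i, a i * x i ^ q i) :
    ¬ Function.Injective (globalMap p d f) := by
  have hf_neg : ∀ x, f (-x) = f x := fun x => by
    rw [hf, hf, Finset.sum_mul_neg_pow_of_even a hq_even]
  have : Fact (2 < p) := ⟨hp3⟩
  exact not_injective_globalMap_of_neg_invariant hf_neg ZMod.neg_one_ne_one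

/-- Let `p` be a prime with `p ≥ 3`, let `d ≥ 0`, and let `f` be a totally
separated local rule `f(x_1,…,x_{d+1}) = Σ_i a_i x_i ^ q_i`.  If every exponent
`q_i` is a positive even integer, then the global map of the CA with local rule
`f` is not injective. -/
theorem totallySeparated_even_exponents_not_injective
    (p : ℕ) (hp : p.Prime) (hp3 : 3 ≤ p) (d : ℕ)
    (a : Fin (d + 1) → ZMod p) (q : Fin (d + 1) → ℕ)
    (hq_pos : ∀ i, 0 < q i) (hq_even : ∀ i, Even (q i))
    (f : (Fin (d + 1) → ZMod p) → ZMod p)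
    (hf : ∀ x, f x = ∑ i, a i * x i ^ q i) :
    ¬ Function.Injective (globalMap p d f) :=
  totallySeparated_even_exponents_not_injective_general p hp3 d a q hq_even f hf
end

section
/- Let p be a prime with p ≥ 3 and let F be an LR-separated cellular automaton over ZMod p with leftmost position ℓ and rightmost position r, where ℓ + 1 < r, so the local rule is f(x_1,…,x_{d+1}) = a_ℓ x_ℓ^{q_ℓ} + π(x_{ℓ+1},…,x_{r−1}) + a_r x_r^{q_r} with a_ℓ, a_r ≠ 0, q_ℓ, q_r ≥ 1, and π : (ZMod p)^{r−ℓ−1} → ZMod p an arbitrary map. Assume π is not balanced, i.e. it is not the case that every α ∈ ZMod p has exactly p^{r−ℓ−2} preimages under π. Then F is surjective if and only if gcd(q_ℓ, p−1) = 1 or gcd(q_r, p−1) = 1. -/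
namespace LRAux

variable {p : ℕ}

lemma pow_mul_bijective (hp : p.Prime) {a : ZMod p} (ha : a ≠ 0) {q : ℕ} (hq : 1 ≤ q)
    (hg : Nat.gcd q (p - 1) = 1) : Function.Bijective (fun u : ZMod p => a * u ^ q) := by
  haveI : Fact p.Prime := ⟨hp⟩
  rw [Finite.injective_iff_bijective.symm]
  intro u v huv
  simp only at huv
  have h2 : u ^ q = v ^ q := mul_left_cancel₀ ha huv
  rcases eq_or_ne v 0 with hv | hv
  · subst hv
    have h0 : u ^ q = 0 := by rw [h2]; exact zero_pow (by omega)
    exact pow_eq_zero_iff (by omega : q ≠ 0) |>.mp h0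
  · rcases eq_or_ne u 0 with hu | hu
    · exfalso; apply hv
      subst hu
      have h0 : v ^ q = 0 := by rw [← h2]; exact zero_pow (by omega)
      exact (pow_eq_zero_iff (by omega : q ≠ 0)).mp h0
    · set uu : (ZMod p)ˣ := Units.mk0 u hu
      set vv : (ZMod p)ˣ := Units.mk0 v hv
      have h3 : (uu * vv⁻¹) ^ q = 1 := by
        have : uu ^ q = vv ^ q := by
          ext; push_cast [uu, vv]; exact h2
        rw [mul_pow, this, ← mul_pow, mul_inv_cancel, one_pow]
      have h4 : orderOf (uu * vv⁻¹) ∣ q := orderOf_dvd_of_pow_eq_one h3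
      have h5 : orderOf (uu * vv⁻¹) ∣ p - 1 := by
        have := orderOf_dvd_card (x := uu * vv⁻¹)
        rwa [ZMod.card_units] at this
      have h6 : orderOf (uu * vv⁻¹) = 1 := Nat.eq_one_of_dvd_coprimes hg h4 h5
      have h7 : uu = vv := by
        have := orderOf_eq_one_iff.mp h6
        rwa [mul_inv_eq_one] at this
      have : (uu : ZMod p) = vv := by rw [h7]
      simpa [uu, vv] using this

lemma exists_partial (d : ℕ) (f : (Fin (d + 1) → ZMod p) → ZMod p)
    (t : Fin (d + 1)) (g : ZMod p → (Fin (d + 1) → ZMod p) → ZMod p)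
    (hA : ∀ z w, f (Function.update w t (g z w)) = z)
    (hB : ∀ z w w', (∀ k, t < k → w k = w' k) → g z w = g z w')
    (y : ℤ → ZMod p) (n : ℤ) :
    ∃ x, ∀ i ≤ n, globalMap p d f x i = y i := by
  classical
  set B : ℤ := n + (t : ℕ) + 1 with hB'
  let v : ℕ → ℤ → ZMod p := fun T =>
    Nat.rec (motive := fun _ => ℤ → ZMod p) (fun _ => 0)
      (fun T vT => fun j =>
        if j = B - (T + 1) then
          g (y (j - (t : ℕ))) (fun k => vT (j - (t : ℕ) + (k : ℕ)))
        else vT j) T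
  have vsucc : ∀ T j, v (T + 1) j =
      if j = B - (T + 1 : ℕ) then
        g (y (j - (t : ℕ))) (fun k => v T (j - (t : ℕ) + (k : ℕ)))
      else v T j := fun _ _ => rfl
  have stab : ∀ (T' T : ℕ), T ≤ T' → ∀ j, B - (T : ℤ) ≤ j → v T' j = v T j := by
    intro T'
    induction T' with
    | zero =>
      intro T hT j _
      obtain rfl : T = 0 := by omega
      rfl
    | succ T' ih =>
      intro T hT j hj
      rcases Nat.lt_or_ge T (T' + 1) with h | h
      · rw [vsucc, if_neg (by push_cast; omega)]
        exact ih T (by omega) j hj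
      · have : T = T' + 1 := by omega
        subst this; rfl
  have stab0 : ∀ (T T' : ℕ) (j : ℤ), B - (T : ℤ) ≤ j → B - (T' : ℤ) ≤ j → v T' j = v T j := by
    intro T T' j h1 h2
    rcases le_total T T' with h | h
    · exact stab T' T h j h1
    · exact (stab T T' h j h2).symm
  set x : ℤ → ZMod p := fun j => v (B - j).toNat j with hx
  have xv : ∀ (T : ℕ) (j : ℤ), B - (T : ℤ) ≤ j → x j = v T j := by
    intro T j hT
    have h0 : B - ((B - j).toNat : ℤ) ≤ j := by omega
    exact stab0 T (B - j).toNat j hT h0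
  refine ⟨x, ?_⟩
  intro i hi
  set j : ℤ := i + (t : ℕ) with hj
  have hjB : (0:ℤ) < B - j := by omega
  set T' : ℕ := (B - j - 1).toNat with hT'
  have hTval : (T' : ℤ) = B - j - 1 := by omega
  set w : Fin (d + 1) → ZMod p := fun k => x (i + (k : ℕ)) with hw
  have hxj : x j = v (T' + 1) j := xv (T' + 1) j (by push_cast; omega)
  have hcond : j = B - ((T' : ℤ) + 1) := by omega
  have hstep : v (T' + 1) j = g (y (j - (t : ℕ))) (fun k => v T' (j - (t : ℕ) + (k : ℕ))) := by
    rw [vsucc, if_pos (by push_cast; omega)]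
  have hji : j - (t : ℕ) = i := by omega
  have hwt : w t = g (y i) w := by
    have h1 : w t = x j := rfl
    rw [h1, hxj, hstep, hji]
    apply hB
    intro k hk
    have hk' : (t : ℕ) < (k : ℕ) := hk
    have : B - (T' : ℤ) ≤ i + (k : ℕ) := by omega
    exact (xv T' (i + (k : ℕ)) this).symm
  have : globalMap p d f x i = f w := rfl
  rw [this]
  have hwu : w = Function.update w t (g (y i) w) := by
    rw [← hwt]; exact (Function.update_eq_self t w).symm
  calc f w = f (Function.update w t (g (y i) w)) := by rw [← hwu]
    _ = y i := hA (y i) w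

open Filter in
lemma glue (hp : p.Prime) (d : ℕ) (f : (Fin (d + 1) → ZMod p) → ZMod p) (y : ℤ → ZMod p)
    (H : ∀ n : ℕ, ∃ x, ∀ i : ℤ, i.natAbs ≤ n → globalMap p d f x i = y i) :
    ∃ x, globalMap p d f x = y := by
  haveI : Fact p.Prime := ⟨hp⟩
  choose X hX using H
  let U : Ultrafilter ℕ := Ultrafilter.of atTop
  have hU : (U : Filter ℕ) ≤ atTop := Ultrafilter.of_le _
  have hval : ∀ j : ℤ, ∃ a : ZMod p, {n : ℕ | X n j = a} ∈ U := by
    intro j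
    by_contra h
    push_neg at h
    have h2 : ∀ a : ZMod p, {n : ℕ | X n j = a}ᶜ ∈ U := fun a =>
      Ultrafilter.compl_mem_iff_notMem.mpr (h a)
    have h3 : (⋂ a : ZMod p, {n : ℕ | X n j = a}ᶜ) ∈ U := Filter.iInter_mem.mpr h2
    obtain ⟨n, hn⟩ := Ultrafilter.nonempty_of_mem h3
    simp only [Set.mem_iInter, Set.mem_compl_iff, Set.mem_setOf_eq] at hn
    exact hn (X n j) rfl
  choose x hx using hval
  refine ⟨x, ?_⟩
  funext i
  have hsets : ((⋂ k : Fin (d + 1), {n : ℕ | X n (i + (k : ℕ)) = x (i + (k : ℕ))}) ∩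
      {n : ℕ | i.natAbs ≤ n}) ∈ U := by
    refine Filter.inter_mem (Filter.iInter_mem.mpr fun k => hx _) (hU ?_)
    exact Filter.mem_atTop i.natAbs
  obtain ⟨n, hn⟩ := Ultrafilter.nonempty_of_mem hsets
  obtain ⟨hn1, hn2⟩ := hn
  simp only [Set.mem_iInter, Set.mem_setOf_eq] at hn1 hn2
  calc globalMap p d f x i = f (fun k => x (i + (k : ℕ))) := rfl
    _ = f (fun k => X n (i + (k : ℕ))) := by
        congr 1; funext k; exact (hn1 k).symm
    _ = y i := hX n i hn2

lemma surj_of_solvable (hp : p.Prime) (d : ℕ) (f : (Fin (d + 1) → ZMod p) → ZMod p)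
    (t : Fin (d + 1)) (g : ZMod p → (Fin (d + 1) → ZMod p) → ZMod p)
    (hA : ∀ z w, f (Function.update w t (g z w)) = z)
    (hB : ∀ z w w', (∀ k, t < k → w k = w' k) → g z w = g z w') :
    Function.Surjective (globalMap p d f) := by
  intro y
  apply glue hp d f y
  intro n
  obtain ⟨x, hx⟩ := exists_partial d f t g hA hB y n
  exact ⟨x, fun i hi => hx i (by omega)⟩

lemma surj_left (hp : p.Prime) {d : ℕ} {ℓ r : Fin (d + 1)} (hlr : (ℓ : ℕ) + 1 < (r : ℕ))
    {aℓ ar : ZMod p} (haℓ : aℓ ≠ 0)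
    {qℓ qr : ℕ} (hqℓ : 1 ≤ qℓ)
    (π : ({i : Fin (d + 1) // ℓ < i ∧ i < r} → ZMod p) → ZMod p)
    (f : (Fin (d + 1) → ZMod p) → ZMod p)
    (hf : ∀ x, f x = aℓ * x ℓ ^ qℓ + π (fun i => x i.1) + ar * x r ^ qr)
    (hg : Nat.gcd qℓ (p - 1) = 1) :
    Function.Surjective (globalMap p d f) := by
  have hbij := pow_mul_bijective hp haℓ hqℓ hg
  set E := Function.surjInv hbij.surjective with hE
  have hEr : ∀ z, aℓ * (E z) ^ qℓ = z := fun z => Function.surjInv_eq hbij.surjective z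
  have hℓr : ℓ < r := by rw [Fin.lt_def]; omega
  apply surj_of_solvable hp d f ℓ (fun z w => E (z - π (fun i => w i.1) - ar * w r ^ qr))
  · intro z w
    show f (Function.update w ℓ (E (z - π (fun i => w i.1) - ar * w r ^ qr))) = z
    set c := E (z - π (fun i => w i.1) - ar * w r ^ qr) with hc
    rw [hf]
    have h1 : Function.update w ℓ c ℓ = c := Function.update_self ℓ c w
    have h2 : (fun i : {i : Fin (d + 1) // ℓ < i ∧ i < r} => Function.update w ℓ c i.1)
        = fun i => w i.1 := funext fun i => Function.update_of_ne (ne_of_gt i.2.1) _ _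
    have h3 : Function.update w ℓ c r = w r := Function.update_of_ne (ne_of_gt hℓr) _ _
    rw [h1, h2, h3, hc, hEr]
    ring
  · intro z w w' hww
    show E (z - π (fun i => w i.1) - ar * w r ^ qr)
        = E (z - π (fun i => w' i.1) - ar * w' r ^ qr)
    have h4 : (fun i : {i : Fin (d + 1) // ℓ < i ∧ i < r} => w i.1) = fun i => w' i.1 :=
      funext fun i => hww i.1 i.2.1
    rw [h4, hww r hℓr]

lemma surj_right (hp : p.Prime) {d : ℕ} {ℓ r : Fin (d + 1)} (hlr : (ℓ : ℕ) + 1 < (r : ℕ))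
    {aℓ ar : ZMod p} (har : ar ≠ 0)
    {qℓ qr : ℕ} (hqr : 1 ≤ qr)
    (π : ({i : Fin (d + 1) // ℓ < i ∧ i < r} → ZMod p) → ZMod p)
    (f : (Fin (d + 1) → ZMod p) → ZMod p)
    (hf : ∀ x, f x = aℓ * x ℓ ^ qℓ + π (fun i => x i.1) + ar * x r ^ qr)
    (hg : Nat.gcd qr (p - 1) = 1) :
    Function.Surjective (globalMap p d f) := by
  have hbij := pow_mul_bijective hp har hqr hg
  set E := Function.surjInv hbij.surjective with hE
  have hEr : ∀ z, ar * (E z) ^ qr = z := fun z => Function.surjInv_eq hbij.surjective z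
  have hℓr : ℓ < r := by rw [Fin.lt_def]; omega
  set f' : (Fin (d + 1) → ZMod p) → ZMod p := fun w => f (fun k => w k.rev) with hf'
  have hf'' : ∀ w, f' w = aℓ * (w ℓ.rev) ^ qℓ + π (fun i => w i.1.rev) + ar * (w r.rev) ^ qr :=
    fun w => hf _
  have hsurj' : Function.Surjective (globalMap p d f') := by
    apply surj_of_solvable hp d f' r.rev
      (fun z w => E (z - aℓ * (w ℓ.rev) ^ qℓ - π (fun i => w i.1.rev)))
    · intro z w
      show f' (Function.update w r.rev (E (z - aℓ * (w ℓ.rev) ^ qℓ - π (fun i => w i.1.rev)))) = z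
      set c := E (z - aℓ * (w ℓ.rev) ^ qℓ - π (fun i => w i.1.rev)) with hc
      rw [hf'']
      have hne1 : ℓ.rev ≠ r.rev := fun h => (ne_of_lt hℓr) (Fin.rev_injective h)
      have h1 : Function.update w r.rev c ℓ.rev = w ℓ.rev := Function.update_of_ne hne1 _ _
      have h2 : (fun i : {i : Fin (d + 1) // ℓ < i ∧ i < r} => Function.update w r.rev c i.1.rev)
          = fun i => w i.1.rev :=
        funext fun i => Function.update_of_ne
          (fun h => (ne_of_lt i.2.2) (Fin.rev_injective h)) _ _
      have h3 : Function.update w r.rev c r.rev = c := Function.update_self r.rev c w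
      rw [h1, h2, h3, hc, hEr]
      ring
    · intro z w w' hww
      show E (z - aℓ * (w ℓ.rev) ^ qℓ - π (fun i => w i.1.rev))
          = E (z - aℓ * (w' ℓ.rev) ^ qℓ - π (fun i => w' i.1.rev))
      have hgt1 : r.rev < ℓ.rev := Fin.rev_lt_rev.mpr hℓr
      have h4 : (fun i : {i : Fin (d + 1) // ℓ < i ∧ i < r} => w i.1.rev)
          = fun i => w' i.1.rev :=
        funext fun i => hww i.1.rev (Fin.rev_lt_rev.mpr i.2.2)
      rw [h4, hww ℓ.rev hgt1]
  intro y
  obtain ⟨x', hx'⟩ := hsurj' (fun m => y (-m - d))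
  refine ⟨fun j => x' (-j), ?_⟩
  funext i
  have h5 := congrFun hx' (-i - d)
  have h6 : globalMap p d f' x' (-i - d) = globalMap p d f (fun j => x' (-j)) i := by
    show f (fun k => x' (-i - d + ((k.rev : ℕ) : ℤ))) = f (fun k => x' (-(i + (k : ℕ))))
    congr 1
    funext k
    congr 1
    have hk : (k : ℕ) ≤ d := by omega
    have hrev : ((k.rev : ℕ) : ℤ) = (d : ℤ) - (k : ℕ) := by
      rw [Fin.val_rev]; omega
    rw [hrev]; ring
  rw [← h6, h5]
  norm_num

noncomputable def zet (p : ℕ) : ℂ := Complex.exp (2 * Real.pi * Complex.I / p)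

noncomputable def ec (p : ℕ) (a : ZMod p) : ℂ := zet p ^ a.val

lemma zet_prim (hp : 1 < p) : IsPrimitiveRoot (zet p) p :=
  Complex.isPrimitiveRoot_exp p (by omega)

lemma zet_pow_p (hp : 1 < p) : zet p ^ p = 1 := (zet_prim hp).pow_eq_one

lemma zet_pow_mod (hp : 1 < p) (x : ℕ) : zet p ^ (x % p) = zet p ^ x := by
  conv_rhs => rw [← Nat.div_add_mod x p]
  rw [pow_add, pow_mul, zet_pow_p hp, one_pow, one_mul]

lemma ec_add (hp : 1 < p) (a b : ZMod p) : ec p (a + b) = ec p a * ec p b := by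
  haveI : NeZero p := ⟨by omega⟩
  unfold ec
  rw [ZMod.val_add, zet_pow_mod hp, pow_add]

lemma ec_zero : ec p 0 = 1 := by
  unfold ec
  rcases Nat.eq_zero_or_pos p with h | h
  · subst h; simp [ZMod.val]
  · haveI : NeZero p := ⟨by omega⟩
    rw [ZMod.val_zero, pow_zero]

lemma sum_ec [NeZero p] (hp : 1 < p) : ∑ a : ZMod p, ec p a = 0 := by
  have h1 : ∑ a : ZMod p, ec p a = ∑ i ∈ Finset.range p, zet p ^ i := by
    apply Finset.sum_bij (fun (a : ZMod p) _ => a.val)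
    · intro a _; exact Finset.mem_range.mpr (ZMod.val_lt a)
    · intro a _ b _ hab; exact ZMod.val_injective p hab
    · intro b hb; exact ⟨(b : ZMod p), Finset.mem_univ _,
        (ZMod.val_natCast_of_lt (Finset.mem_range.mp hb))⟩
    · intro a _; rfl
  rw [h1]
  exact (zet_prim hp).geom_sum_eq_zero hp

lemma sum_ec_mul [Fact p.Prime] {c : ZMod p} (hc : c ≠ 0) :
    ∑ a : ZMod p, ec p (c * a) = 0 := by
  have hp1 : 1 < p := Fact.out (p := p.Prime) |>.one_lt
  have h := Equiv.sum_comp (Equiv.mulLeft₀ c hc) (ec p)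
  calc ∑ a : ZMod p, ec p (c * a) = ∑ a : ZMod p, ec p a := h
    _ = 0 := sum_ec hp1

lemma ec_integral (hp : 1 < p) (a : ZMod p) : IsIntegral ℤ (ec p a) := by
  have hζ : IsIntegral ℤ (zet p) := by
    refine ⟨Polynomial.X ^ p - Polynomial.C 1, Polynomial.monic_X_pow_sub_C 1 (by omega), ?_⟩
    simp [Polynomial.eval₂_sub, Polynomial.eval₂_pow, zet_pow_p hp]
  exact hζ.pow _

lemma inversion [Fact p.Prime] {X : Type} [Fintype X] (F : X → ZMod p)
    (h : ∀ b : ZMod p, b ≠ 0 → ∑ x : X, ec p (b * F x) = 0) (α : ZMod p) :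
    Fintype.card {x : X // F x = α} * p = Fintype.card X := by
  classical
  have hp : p.Prime := Fact.out
  have hp1 : 1 < p := hp.one_lt
  have key : ∀ x : X, ∑ b : ZMod p, ec p (b * (F x - α)) = if F x = α then (p : ℂ) else 0 := by
    intro x
    by_cases hx : F x = α
    · rw [if_pos hx]
      have : ∀ b : ZMod p, ec p (b * (F x - α)) = 1 := by
        intro b; rw [hx, sub_self, mul_zero, ec_zero]
      rw [Finset.sum_congr rfl (fun b _ => this b), Finset.sum_const, Finset.card_univ,
        ZMod.card, nsmul_eq_mul, mul_one]
    · rw [if_neg hx]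
      have hne : F x - α ≠ 0 := sub_ne_zero.mpr hx
      have := sum_ec_mul hne
      calc ∑ b : ZMod p, ec p (b * (F x - α)) = ∑ b : ZMod p, ec p ((F x - α) * b) := by
            apply Finset.sum_congr rfl; intro b _; rw [mul_comm]
        _ = 0 := this
  have S1 : ∑ x : X, ∑ b : ZMod p, ec p (b * (F x - α))
      = (Fintype.card {x : X // F x = α} : ℂ) * p := by
    rw [Finset.sum_congr rfl (fun x _ => key x)]
    rw [Finset.sum_ite, Finset.sum_const, Finset.sum_const, smul_zero, add_zero,
      nsmul_eq_mul]
    congr 1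
    rw [Fintype.card_subtype]
  have S2 : ∑ b : ZMod p, ∑ x : X, ec p (b * (F x - α)) = (Fintype.card X : ℂ) := by
    rw [Finset.sum_eq_single_of_mem 0 (Finset.mem_univ _) ?side]
    · have h0 : ∀ x : X, ec p ((0 : ZMod p) * (F x - α)) = 1 := fun x => by
        rw [zero_mul, ec_zero]
      rw [Finset.sum_congr rfl (fun x _ => h0 x), Finset.sum_const, Finset.card_univ,
        nsmul_eq_mul, mul_one]
    case side =>
      intro b _ hb
      have h1 : ∀ x : X, ec p (b * (F x - α)) = ec p (b * F x) * ec p (-(b * α)) := by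
        intro x; rw [← ec_add hp1]; congr 1; ring
      rw [Finset.sum_congr rfl (fun x _ => h1 x), ← Finset.sum_mul, h b hb, zero_mul]
  have hswap : ∑ x : X, ∑ b : ZMod p, ec p (b * (F x - α))
      = ∑ b : ZMod p, ∑ x : X, ec p (b * (F x - α)) := Finset.sum_comm
  have hC : (Fintype.card {x : X // F x = α} : ℂ) * p = (Fintype.card X : ℂ) := by
    rw [← S1, hswap, S2]
  exact_mod_cast hC

lemma gauss_ne_zero [Fact p.Prime] {c : ZMod p} (hc : c ≠ 0) {q : ℕ}
    (hq : 1 ≤ q) (hg : Nat.gcd q (p - 1) ≠ 1) : ∑ u : ZMod p, ec p (c * u ^ q) ≠ 0 := by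
  classical
  have hp : p.Prime := Fact.out
  have hp1 : 1 < p := hp.one_lt
  set f0 : ZMod p → ZMod p := fun u => c * u ^ q with hf0
  set R : Finset (ZMod p) := Finset.univ.filter (fun z : ZMod p => z ^ q = 1) with hR
  set K := R.card with hK
  have hone : (1 : ZMod p) ∈ R := by simp [hR]
  have hdd0 : Nat.gcd q (p - 1) ∣ p - 1 := Nat.gcd_dvd_right _ _
  have hdd2 : 2 ≤ Nat.gcd q (p - 1) := by
    have h0 : Nat.gcd q (p - 1) ≠ 0 := by
      intro h0; have := Nat.eq_zero_of_gcd_eq_zero_left h0; omega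
    omega
  obtain ⟨g, hgen⟩ := IsCyclic.exists_generator (α := (ZMod p)ˣ)
  have hcard : Fintype.card (ZMod p)ˣ = p - 1 := ZMod.card_units p
  have horder : orderOf g = p - 1 := by
    rw [orderOf_eq_card_of_forall_mem_zpowers hgen, Nat.card_eq_fintype_card, hcard]
  set dd := Nat.gcd q (p - 1) with hdd
  set z : (ZMod p)ˣ := g ^ ((p - 1) / dd) with hz
  have hple : dd ≤ p - 1 := Nat.le_of_dvd (by omega) hdd0
  have hzne : z ≠ 1 := by
    intro h1
    have h2 : orderOf g ∣ (p - 1) / dd := orderOf_dvd_of_pow_eq_one h1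
    rw [horder] at h2
    have h3 : (p - 1) / dd < p - 1 := Nat.div_lt_self (by omega) (by omega)
    have h4 : 0 < (p - 1) / dd := Nat.div_pos hple (by omega)
    have := Nat.le_of_dvd h4 h2
    omega
  have hzq : z ^ q = 1 := by
    obtain ⟨q', hq'⟩ := Nat.gcd_dvd_left q (p - 1)
    rw [hz, ← pow_mul]
    have heq : (p - 1) / dd * q = (p - 1) * q' := by
      rw [hq', ← Nat.mul_assoc, Nat.div_mul_cancel hdd0]
    rw [heq, pow_mul]
    have hg1 : g ^ (p - 1) = 1 := by
      rw [← hcard]; exact pow_card_eq_one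
    rw [hg1, one_pow]
  have hzmem : ((z : ZMod p)) ∈ R := by
    rw [hR, Finset.mem_filter]
    refine ⟨Finset.mem_univ _, ?_⟩
    rw [← Units.val_pow_eq_pow_val, hzq, Units.val_one]
  have hzne1 : (z : ZMod p) ≠ 1 := by
    intro h; exact hzne (Units.val_eq_one.mp h)
  have hK2 : 2 ≤ K := by
    rw [hK]
    have : 1 < R.card := Finset.one_lt_card.mpr ⟨1, hone, (z : ZMod p), hzmem, fun h => hzne1 h.symm⟩
    omega
  have hS : ∑ u : ZMod p, ec p (c * u ^ q)
      = ∑ b ∈ Finset.univ.image f0, (Finset.univ.filter fun a => f0 a = b).card • ec p b :=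
    Finset.sum_comp (ec p) f0
  have h0mem : (0 : ZMod p) ∈ Finset.univ.image f0 :=
    Finset.mem_image.mpr ⟨0, Finset.mem_univ _, by simp [hf0, zero_pow (by omega : q ≠ 0)]⟩
  have hfib0 : (Finset.univ.filter fun a => f0 a = 0).card = 1 := by
    have h1 : (Finset.univ.filter fun a => f0 a = 0) = {0} := by
      ext u
      simp [hf0, mul_eq_zero, hc, pow_eq_zero_iff (by omega : q ≠ 0)]
    rw [h1, Finset.card_singleton]
  have hfib : ∀ b ∈ Finset.univ.image f0, b ≠ 0 →
      (Finset.univ.filter fun a => f0 a = b).card = K := by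
    intro b hb hbne
    obtain ⟨u0, _, hu0⟩ := Finset.mem_image.mp hb
    have hu0ne : u0 ≠ 0 := by
      intro h; rw [h] at hu0
      simp only [hf0] at hu0
      rw [zero_pow (by omega : q ≠ 0), mul_zero] at hu0
      exact hbne hu0.symm
    have hbij : R.card = (Finset.univ.filter fun a => f0 a = b).card := by
      apply Finset.card_bij (fun z _ => z * u0)
      · intro w hw
        rw [Finset.mem_filter]
        refine ⟨Finset.mem_univ _, ?_⟩
        have hw1 : w ^ q = 1 := (Finset.mem_filter.mp hw).2
        show c * (w * u0) ^ q = b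
        rw [mul_pow, hw1, one_mul]
        exact hu0
      · intro z1 _ z2 _ he
        exact mul_right_cancel₀ hu0ne he
      · intro u hu
        have hu' : c * u ^ q = b := (Finset.mem_filter.mp hu).2
        refine ⟨u * u0⁻¹, ?_, ?_⟩
        · rw [Finset.mem_filter]
          refine ⟨Finset.mem_univ _, ?_⟩
          have hpow : u ^ q = u0 ^ q := by
            apply mul_left_cancel₀ hc
            rw [hu']
            exact hu0.symm
          show (u * u0⁻¹) ^ q = 1
          rw [mul_pow, hpow, ← mul_pow, mul_inv_cancel₀ hu0ne, one_pow]
        · rw [mul_assoc, inv_mul_cancel₀ hu0ne, mul_one]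
    rw [← hbij, hK]
  have hS2 : ∑ u : ZMod p, ec p (c * u ^ q)
      = 1 + K * ∑ b ∈ (Finset.univ.image f0).erase 0, ec p b := by
    rw [hS]
    conv_lhs => rw [← Finset.insert_erase h0mem]
    rw [Finset.sum_insert (Finset.notMem_erase _ _)]
    rw [hfib0, one_smul, ec_zero]
    congr 1
    rw [Finset.mul_sum]
    apply Finset.sum_congr rfl
    intro b hb
    rw [hfib b (Finset.mem_of_mem_erase hb) (Finset.ne_of_mem_erase hb), nsmul_eq_mul]
  intro hS0
  rw [hS2] at hS0
  set T := ∑ b ∈ (Finset.univ.image f0).erase 0, ec p b with hT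
  have hTK : (K : ℂ) * T = -1 := by linear_combination hS0
  have hTint : IsIntegral ℤ T := IsIntegral.sum _ (fun b _ => ec_integral hp1 b)
  have hKne : (K : ℂ) ≠ 0 := Nat.cast_ne_zero.mpr (by omega)
  have hKQ : ((K : ℚ) : ℂ) = (K : ℂ) := by push_cast; rfl
  have halg : algebraMap ℚ ℂ (-1 / (K : ℚ)) = T := by
    have h1 : algebraMap ℚ ℂ (-1 / (K : ℚ)) = ((-1 / (K : ℚ) : ℚ) : ℂ) := rfl
    have h2 : ((-1 / (K : ℚ) : ℚ) : ℂ) = -1 / (K : ℂ) := by push_cast; ring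
    rw [h1, h2, div_eq_iff hKne]
    linear_combination -hTK
  have hint2 : IsIntegral ℤ ((-1 : ℚ) / (K : ℚ)) := by
    have hinj : Function.Injective (algebraMap ℚ ℂ) := (algebraMap ℚ ℂ).injective
    rw [← isIntegral_algebraMap_iff hinj, halg]
    exact hTint
  obtain ⟨m, hm⟩ := IsIntegrallyClosed.isIntegral_iff.mp hint2
  have hmQ : (m : ℚ) = -1 / (K : ℚ) := by
    rw [← hm]; simp
  have hKQne : (K : ℚ) ≠ 0 := Nat.cast_ne_zero.mpr (by omega)
  rw [eq_div_iff hKQne] at hmQ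
  have hZ : (-1 : ℤ) = m * (K : ℤ) := by exact_mod_cast hmQ.symm
  have hdvd : (K : ℤ) ∣ 1 := ⟨-m, by linarith⟩
  have := Int.le_of_dvd (by norm_num) hdvd
  omega

lemma exists_small_fiber [Fact p.Prime] {d : ℕ} {ℓ r : Fin (d + 1)} (hlr : (ℓ : ℕ) + 1 < (r : ℕ))
    {aℓ ar : ZMod p} (haℓ : aℓ ≠ 0) (har : ar ≠ 0)
    {qℓ qr : ℕ} (hqℓ : 1 ≤ qℓ) (hqr : 1 ≤ qr)
    (π : ({i : Fin (d + 1) // ℓ < i ∧ i < r} → ZMod p) → ZMod p)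
    (hπ : ¬ ∀ α : ZMod p,
      Nat.card {x : {i : Fin (d + 1) // ℓ < i ∧ i < r} → ZMod p // π x = α}
      = p ^ ((r : ℕ) - (ℓ : ℕ) - 2))
    (f : (Fin (d + 1) → ZMod p) → ZMod p)
    (hf : ∀ x, f x = aℓ * x ℓ ^ qℓ + π (fun i => x i.1) + ar * x r ^ qr)
    (hgℓ : Nat.gcd qℓ (p - 1) ≠ 1) (hgr : Nat.gcd qr (p - 1) ≠ 1) :
    ∃ α : ZMod p, Fintype.card {x : Fin (d + 1) → ZMod p // f x = α} < p ^ d := by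
  classical
  have hp : p.Prime := Fact.out
  have hp1 : 1 < p := hp.one_lt
  haveI : NeZero p := ⟨by omega⟩
  have hℓr : ℓ < r := by rw [Fin.lt_def]; omega
  -- Step 1: a nontrivial character against which π has nonzero sum
  have hMcard : Fintype.card {i : Fin (d + 1) // ℓ < i ∧ i < r} = (r : ℕ) - (ℓ : ℕ) - 1 := by
    rw [Fintype.card_subtype]
    have h1 : Finset.univ.filter (fun i : Fin (d + 1) => ℓ < i ∧ i < r) = Finset.Ioo ℓ r := by
      ext i; simp [Finset.mem_Ioo]
    rw [h1, Fin.card_Ioo]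
  have hB : ∃ b : ZMod p, b ≠ 0 ∧
      ∑ m : ({i : Fin (d + 1) // ℓ < i ∧ i < r} → ZMod p), ec p (b * π m) ≠ 0 := by
    by_contra h
    push_neg at h
    apply hπ
    intro α
    have hinv := inversion π (fun b hb => h b hb) α
    have hcard2 : Fintype.card ({i : Fin (d + 1) // ℓ < i ∧ i < r} → ZMod p)
        = p ^ ((r : ℕ) - (ℓ : ℕ) - 1) := by
      rw [Fintype.card_fun, ZMod.card, hMcard]
    rw [hcard2] at hinv
    have hrl : (r : ℕ) - (ℓ : ℕ) - 1 = ((r : ℕ) - (ℓ : ℕ) - 2) + 1 := by omega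
    rw [hrl, pow_succ] at hinv
    rw [Nat.card_eq_fintype_card]
    exact Nat.eq_of_mul_eq_mul_right (by omega : 0 < p) hinv
  obtain ⟨b, hb0, hbS⟩ := hB
  -- Step 2: the product decomposition of the full character sum
  set Qout : Fin (d + 1) → Prop := fun i => ¬(i = ℓ ∨ (ℓ < i ∧ i < r) ∨ i = r) with hQ
  set Ψ : (ZMod p) × ({i : Fin (d + 1) // ℓ < i ∧ i < r} → ZMod p) × (ZMod p) ×
      ({i : Fin (d + 1) // Qout i} → ZMod p) → (Fin (d + 1) → ZMod p) :=
    fun zq => fun i =>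
      if h1 : i = ℓ then zq.1
      else if h2 : ℓ < i ∧ i < r then zq.2.1 ⟨i, h2⟩
      else if h3 : i = r then zq.2.2.1
      else zq.2.2.2 ⟨i, fun hor => by rcases hor with h | h | h; exacts [h1 h, h2 h, h3 h]⟩
    with hΨ
  have hc1 : ∀ zq, Ψ zq ℓ = zq.1 := by
    intro zq; simp [hΨ]
  have hc2 : ∀ zq (i : {i : Fin (d + 1) // ℓ < i ∧ i < r}), Ψ zq i.1 = zq.2.1 i := by
    intro zq i; simp only [hΨ]; rw [dif_neg (ne_of_gt i.2.1), dif_pos i.2]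
  have hc3 : ∀ zq, Ψ zq r = zq.2.2.1 := by
    intro zq; simp only [hΨ]
    rw [dif_neg (ne_of_gt hℓr), dif_neg (fun h : ℓ < r ∧ r < r => lt_irrefl r h.2)]
    simp
  have hc4 : ∀ zq (i : {i : Fin (d + 1) // Qout i}), Ψ zq i.1 = zq.2.2.2 i := by
    intro zq i
    have h2 : ¬((i : Fin (d+1)) = ℓ ∨ (ℓ < i.1 ∧ i.1 < r) ∨ (i : Fin (d+1)) = r) := i.2
    have hn1 : (i : Fin (d+1)) ≠ ℓ := fun h => h2 (Or.inl h)
    have hn2 : ¬(ℓ < i.1 ∧ i.1 < r) := fun h => h2 (Or.inr (Or.inl h))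
    have hn3 : (i : Fin (d+1)) ≠ r := fun h => h2 (Or.inr (Or.inr h))
    simp only [hΨ]
    rw [dif_neg hn1, dif_neg hn2, dif_neg hn3]
  have hΨbij : Function.Bijective Ψ := by
    constructor
    · intro z1 z2 h12
      have hu : z1.1 = z2.1 := by rw [← hc1 z1, ← hc1 z2, h12]
      have hm : z1.2.1 = z2.2.1 := by
        funext i; rw [← hc2 z1 i, ← hc2 z2 i, h12]
      have hv : z1.2.2.1 = z2.2.2.1 := by rw [← hc3 z1, ← hc3 z2, h12]
      have ho : z1.2.2.2 = z2.2.2.2 := by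
        funext i; rw [← hc4 z1 i, ← hc4 z2 i, h12]
      obtain ⟨u1, m1, v1, o1⟩ := z1
      obtain ⟨u2, m2, v2, o2⟩ := z2
      simp only at hu hm hv ho
      rw [hu, hm, hv, ho]
    · intro x
      refine ⟨(x ℓ, fun i => x i.1, x r, fun i => x i.1), ?_⟩
      funext i
      by_cases h1 : i = ℓ
      · subst h1; rw [hc1]
      by_cases h2 : ℓ < i ∧ i < r
      · simp only [hΨ]; rw [dif_neg h1, dif_pos h2]
      by_cases h3 : i = r
      · subst h3; rw [hc3]
      · simp only [hΨ]; rw [dif_neg h1, dif_neg h2, dif_neg h3]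
  -- the three factor sums
  have hSℓ : ∑ u : ZMod p, ec p (b * (aℓ * u ^ qℓ)) ≠ 0 := by
    have h1 : ∀ u : ZMod p, b * (aℓ * u ^ qℓ) = (b * aℓ) * u ^ qℓ := fun u => by ring
    rw [Finset.sum_congr rfl (fun u _ => by rw [h1 u])]
    exact gauss_ne_zero (mul_ne_zero hb0 haℓ) hqℓ hgℓ
  have hSr : ∑ v : ZMod p, ec p (b * (ar * v ^ qr)) ≠ 0 := by
    have h1 : ∀ v : ZMod p, b * (ar * v ^ qr) = (b * ar) * v ^ qr := fun v => by ring
    rw [Finset.sum_congr rfl (fun v _ => by rw [h1 v])]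
    exact gauss_ne_zero (mul_ne_zero hb0 har) hqr hgr
  have hful : ∑ x : (Fin (d + 1) → ZMod p), ec p (b * f x)
      = (∑ u : ZMod p, ec p (b * (aℓ * u ^ qℓ)))
        * (∑ m : ({i : Fin (d + 1) // ℓ < i ∧ i < r} → ZMod p), ec p (b * π m))
        * (∑ v : ZMod p, ec p (b * (ar * v ^ qr)))
        * (Fintype.card ({i : Fin (d + 1) // Qout i} → ZMod p) : ℂ) := by
    rw [← Function.Bijective.sum_comp hΨbij (fun x => ec p (b * f x))]
    have hfΨ : ∀ zq, ec p (b * f (Ψ zq))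
        = ec p (b * (aℓ * zq.1 ^ qℓ)) * ec p (b * π zq.2.1)
          * ec p (b * (ar * zq.2.2.1 ^ qr)) := by
      intro zq
      rw [hf]
      rw [hc1, hc3]
      have hmid : (fun i : {i : Fin (d + 1) // ℓ < i ∧ i < r} => Ψ zq i.1) = zq.2.1 :=
        funext (hc2 zq)
      rw [hmid]
      rw [mul_add, mul_add, ec_add hp1, ec_add hp1]
    rw [Finset.sum_congr rfl (fun zq _ => hfΨ zq)]
    simp only [Fintype.sum_prod_type]
    simp only [Finset.sum_const, Finset.card_univ, nsmul_eq_mul, ← Finset.sum_mul,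
      ← Finset.mul_sum]
    ring
  -- Step 3: conclude by balance counting
  by_contra hcon
  push_neg at hcon
  have htotal : ∑ α : ZMod p, Fintype.card {x : Fin (d + 1) → ZMod p // f x = α}
      = p ^ (d + 1) := by
    calc ∑ α : ZMod p, Fintype.card {x : Fin (d + 1) → ZMod p // f x = α}
        = Fintype.card (Fin (d + 1) → ZMod p) := by
          rw [← Fintype.card_sigma]
          exact Fintype.card_congr (Equiv.sigmaFiberEquiv f)
      _ = p ^ (d + 1) := by rw [Fintype.card_fun, ZMod.card, Fintype.card_fin]
  have hall : ∀ α, Fintype.card {x : Fin (d + 1) → ZMod p // f x = α} = p ^ d := by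
    by_contra hne
    push_neg at hne
    obtain ⟨α0, hα0⟩ := hne
    have hlt : ∑ _α : ZMod p, p ^ d
        < ∑ α : ZMod p, Fintype.card {x : Fin (d + 1) → ZMod p // f x = α} :=
      Finset.sum_lt_sum (fun α _ => hcon α)
        ⟨α0, Finset.mem_univ _, lt_of_le_of_ne (hcon α0) (Ne.symm hα0)⟩
    rw [htotal, Finset.sum_const, Finset.card_univ, ZMod.card, smul_eq_mul] at hlt
    have hpp : p * p ^ d = p ^ (d + 1) := by ring
    omega
  have hzero : ∑ x : (Fin (d + 1) → ZMod p), ec p (b * f x) = 0 := by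
    calc ∑ x : (Fin (d + 1) → ZMod p), ec p (b * f x)
        = ∑ σ : (Σ α : ZMod p, {x : Fin (d + 1) → ZMod p // f x = α}),
            ec p (b * f σ.2.1) :=
          (Equiv.sum_comp (Equiv.sigmaFiberEquiv f) (fun x => ec p (b * f x))).symm
      _ = ∑ α : ZMod p, ∑ xf : {x : Fin (d + 1) → ZMod p // f x = α}, ec p (b * f xf.1) := by
          rw [← Finset.univ_sigma_univ, Finset.sum_sigma]
      _ = ∑ α : ZMod p, (Fintype.card {x : Fin (d + 1) → ZMod p // f x = α} : ℂ)
            * ec p (b * α) := by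
          apply Finset.sum_congr rfl
          intro α _
          rw [Finset.sum_congr rfl (fun xf _ => by rw [xf.2]), Finset.sum_const,
            Finset.card_univ, nsmul_eq_mul]
      _ = (p ^ d : ℂ) * ∑ α : ZMod p, ec p (b * α) := by
          rw [Finset.mul_sum]
          apply Finset.sum_congr rfl
          intro α _
          rw [hall α]
          push_cast
          ring
      _ = 0 := by rw [sum_ec_mul hb0, mul_zero]
  rw [hful] at hzero
  have hcne : (Fintype.card ({i : Fin (d + 1) // Qout i} → ZMod p) : ℂ) ≠ 0 :=
    Nat.cast_ne_zero.mpr Fintype.card_ne_zero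
  exact (mul_ne_zero (mul_ne_zero (mul_ne_zero hSℓ hbS) hSr) hcne) hzero

lemma binom_aux (a n : ℕ) : a ^ (n + 1) + (n + 1) * a ^ n ≤ (a + 1) ^ (n + 1) := by
  induction n with
  | zero => simpa using Nat.le_refl (a + 1)
  | succ n ih =>
    have hexp : (a ^ (n + 1) + (n + 1) * a ^ n) * (a + 1)
        = a ^ (n + 2) + (n + 2) * a ^ (n + 1) + (n + 1) * a ^ n := by ring
    calc a ^ (n + 2) + (n + 2) * a ^ (n + 1)
        ≤ (a ^ (n + 1) + (n + 1) * a ^ n) * (a + 1) := by rw [hexp]; omega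
      _ ≤ (a + 1) ^ (n + 1) * (a + 1) := Nat.mul_le_mul_right _ ih
      _ = (a + 1) ^ (n + 2) := by ring

lemma numeric_aux (m : ℕ) :
    (m + 2) ^ 2 * (m + 1) ^ ((m + 1) * (m + 1) + 1) < (m + 2) ^ ((m + 1) * (m + 1) + 2) := by
  have h1 : 2 * (m + 1) ^ (m + 1) ≤ (m + 2) ^ (m + 1) := by
    calc 2 * (m + 1) ^ (m + 1) = (m + 1) ^ (m + 1) + (m + 1) * (m + 1) ^ m := by ring
      _ ≤ (m + 2) ^ (m + 1) := binom_aux (m + 1) m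
  have h2 : 2 ^ (m + 1) * (m + 1) ^ ((m + 1) * (m + 1)) ≤ (m + 2) ^ ((m + 1) * (m + 1)) := by
    calc 2 ^ (m + 1) * (m + 1) ^ ((m + 1) * (m + 1))
        = (2 * (m + 1) ^ (m + 1)) ^ (m + 1) := by rw [mul_pow, ← pow_mul]
      _ ≤ ((m + 2) ^ (m + 1)) ^ (m + 1) := Nat.pow_le_pow_left h1 _
      _ = (m + 2) ^ ((m + 1) * (m + 1)) := by rw [← pow_mul]
  have h3 : m + 2 ≤ 2 ^ (m + 1) := by
    have := Nat.lt_two_pow_self (n := m + 1)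
    omega
  have h4 : (m + 2) * (m + 1) ^ ((m + 1) * (m + 1)) ≤ (m + 2) ^ ((m + 1) * (m + 1)) := by
    calc (m + 2) * (m + 1) ^ ((m + 1) * (m + 1))
        ≤ 2 ^ (m + 1) * (m + 1) ^ ((m + 1) * (m + 1)) := Nat.mul_le_mul_right _ h3
      _ ≤ (m + 2) ^ ((m + 1) * (m + 1)) := h2
  have h5 : (m + 1) ^ ((m + 1) * (m + 1)) * (m + 1) < (m + 1) ^ ((m + 1) * (m + 1)) * (m + 2) := by
    have hpos : 0 < (m + 1) ^ ((m + 1) * (m + 1)) := by positivity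
    exact (mul_lt_mul_iff_right₀ hpos).mpr (by omega)
  calc (m + 2) ^ 2 * (m + 1) ^ ((m + 1) * (m + 1) + 1)
      = (m + 2) ^ 2 * ((m + 1) ^ ((m + 1) * (m + 1)) * (m + 1)) := by ring
    _ < (m + 2) ^ 2 * ((m + 1) ^ ((m + 1) * (m + 1)) * (m + 2)) := by
        have hpos : 0 < (m + 2) ^ 2 := by positivity
        exact (mul_lt_mul_iff_right₀ hpos).mpr h5
    _ = (m + 2) ^ 2 * ((m + 2) * (m + 1) ^ ((m + 1) * (m + 1))) := by ring
    _ ≤ (m + 2) ^ 2 * ((m + 2) ^ ((m + 1) * (m + 1))) := by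
        exact Nat.mul_le_mul_left _ h4
    _ = (m + 2) ^ ((m + 1) * (m + 1) + 2) := by ring

lemma goe [Fact p.Prime] {d : ℕ} (hd : 1 ≤ d) (f : (Fin (d + 1) → ZMod p) → ZMod p)
    (α : ZMod p) (hN : Fintype.card {w : Fin (d + 1) → ZMod p // f w = α} < p ^ d) :
    ¬ Function.Surjective (globalMap p d f) := by
  classical
  have hp : p.Prime := Fact.out
  haveI : NeZero p := ⟨hp.ne_zero⟩
  intro hs
  set q := p ^ d with hqdef
  have hq2 : 2 ≤ q := Nat.one_lt_pow (by omega) hp.one_lt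
  set k := (q - 1) * (q - 1) + 1 with hkdef
  set wpat : (Fin (k + 1) → Fin d → ZMod p) → ℕ → ZMod p := fun g t =>
    if ht : t % (d + 1) = d then α
    else g ⟨(t / (d + 1)) % (k + 1), Nat.mod_lt _ (by omega)⟩
      ⟨t % (d + 1), by have := Nat.mod_lt t (show 0 < d + 1 by omega); omega⟩
    with hwpat
  set y : (Fin (k + 1) → Fin d → ZMod p) → ℤ → ZMod p := fun g i =>
    if 0 ≤ i then wpat g i.toNat else 0 with hy
  choose X hX using fun g => hs (y g)
  have hy_nat : ∀ g (t : ℕ), y g (t : ℤ) = wpat g t := by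
    intro g t
    simp only [hy]
    rw [if_pos (Int.natCast_nonneg t), Int.toNat_natCast]
  have hwin : ∀ g (j : ℕ), j < k → f (fun s : Fin (d + 1) =>
      X g (((d + (d + 1) * j : ℕ) : ℤ) + (s : ℕ))) = α := by
    intro g j hj
    have h1 := congrFun (hX g) ((d + (d + 1) * j : ℕ) : ℤ)
    have hmod : (d + (d + 1) * j) % (d + 1) = d := by
      rw [Nat.add_mul_mod_self_left]
      exact Nat.mod_eq_of_lt (by omega)
    have h2 : y g ((d + (d + 1) * j : ℕ) : ℤ) = α := by
      rw [hy_nat]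
      simp only [hwpat]
      rw [dif_pos hmod]
    exact h1.trans h2
  set Φ : (Fin (k + 1) → Fin d → ZMod p) →
      (Fin d → ZMod p) × (Fin k → {w : Fin (d + 1) → ZMod p // f w = α}) × (Fin d → ZMod p) :=
    fun g => (fun s => X g ((s : ℕ) : ℤ),
      fun j => ⟨fun s => X g (((d + (d + 1) * (j : ℕ) : ℕ) : ℤ) + (s : ℕ)), hwin g j j.isLt⟩,
      fun s => X g (((d + (d + 1) * k + (s : ℕ) : ℕ) : ℤ))) with hΦ
  have hinj : Function.Injective Φ := by
    intro g g' hgg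
    have hXeq : ∀ t : ℕ, t < d + (d + 1) * k + d → X g (t : ℤ) = X g' (t : ℤ) := by
      intro t ht
      rcases Nat.lt_or_ge t d with h1 | h1
      · exact congrFun (congrArg Prod.fst hgg) ⟨t, h1⟩
      rcases Nat.lt_or_ge t (d + (d + 1) * k) with h2 | h2
      · set u := t - d with hu
        have hjlt : u / (d + 1) < k := Nat.div_lt_of_lt_mul (by omega)
        have hcmp := congrFun (congrArg (fun z => z.2.1) hgg) ⟨u / (d + 1), hjlt⟩
        have hcmp2 : X g (((d + (d + 1) * (u / (d + 1)) : ℕ) : ℤ) + ((u % (d + 1) : ℕ) : ℤ))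
            = X g' (((d + (d + 1) * (u / (d + 1)) : ℕ) : ℤ) + ((u % (d + 1) : ℕ) : ℤ)) :=
          congrFun (congrArg Subtype.val hcmp) ⟨u % (d + 1), Nat.mod_lt _ (by omega)⟩
        have hpos : (((d + (d + 1) * (u / (d + 1)) : ℕ) : ℤ) + ((u % (d + 1) : ℕ) : ℤ))
            = (t : ℤ) := by
          have hnat2 : d + (d + 1) * (u / (d + 1)) + u % (d + 1) = t := by
            have hdm := Nat.div_add_mod u (d + 1)
            omega
          exact_mod_cast congrArg (fun z : ℕ => (z : ℤ)) hnat2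
        rw [hpos] at hcmp2
        exact hcmp2
      · have hslt : t - (d + (d + 1) * k) < d := by omega
        have hcmp : X g (((d + (d + 1) * k + (t - (d + (d + 1) * k)) : ℕ) : ℤ))
            = X g' (((d + (d + 1) * k + (t - (d + (d + 1) * k)) : ℕ) : ℤ)) :=
          congrFun (congrArg (fun z => z.2.2) hgg) ⟨t - (d + (d + 1) * k), hslt⟩
        have hnat : d + (d + 1) * k + (t - (d + (d + 1) * k)) = t := by omega
        rw [hnat] at hcmp
        exact hcmp
    have hyeq : ∀ t : ℕ, t < d + (d + 1) * k → y g (t : ℤ) = y g' (t : ℤ) := by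
      intro t ht
      have h1 := congrFun (hX g) (t : ℤ)
      have h2 := congrFun (hX g') (t : ℤ)
      rw [← h1, ← h2]
      show f (fun s => X g ((t : ℤ) + (s : ℕ))) = f (fun s => X g' ((t : ℤ) + (s : ℕ)))
      congr 1
      funext s
      have hcast : ((t : ℤ) + (s : ℕ)) = ((t + (s : ℕ) : ℕ) : ℤ) := by push_cast; ring
      rw [hcast]
      exact hXeq (t + (s : ℕ)) (by have := s.isLt; omega)
    funext j sfin
    have ht : (d + 1) * (j : ℕ) + (sfin : ℕ) < d + (d + 1) * k := by
      have h1 : (j : ℕ) ≤ k := by have := j.isLt; omega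
      have h2 : (d + 1) * (j : ℕ) ≤ (d + 1) * k := Nat.mul_le_mul_left _ h1
      have := sfin.isLt
      omega
    have hy2 := hyeq ((d + 1) * (j : ℕ) + (sfin : ℕ)) ht
    rw [hy_nat, hy_nat] at hy2
    simp only [hwpat] at hy2
    have hmod : ((d + 1) * (j : ℕ) + (sfin : ℕ)) % (d + 1) = (sfin : ℕ) := by
      rw [Nat.mul_add_mod]
      exact Nat.mod_eq_of_lt (by have := sfin.isLt; omega)
    have hne : ¬(((d + 1) * (j : ℕ) + (sfin : ℕ)) % (d + 1) = d) := by
      rw [hmod]; have := sfin.isLt; omega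
    rw [dif_neg hne, dif_neg hne] at hy2
    have hidx1 : (((d + 1) * (j : ℕ) + (sfin : ℕ)) / (d + 1)) % (k + 1) = (j : ℕ) := by
      have hdiv : ((d + 1) * (j : ℕ) + (sfin : ℕ)) / (d + 1) = (j : ℕ) := by
        rw [Nat.mul_add_div (by omega)]
        rw [Nat.div_eq_of_lt (by have := sfin.isLt; omega), Nat.add_zero]
      rw [hdiv]
      exact Nat.mod_eq_of_lt (by have := j.isLt; omega)
    simp only [hidx1, hmod, Fin.eta] at hy2
    exact hy2
  have hcard := Fintype.card_le_of_injective Φ hinj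
  have hcl : Fintype.card (Fin (k + 1) → Fin d → ZMod p) = q ^ (k + 1) := by
    rw [Fintype.card_fun, Fintype.card_fun, ZMod.card, Fintype.card_fin, Fintype.card_fin]
  have hcr : Fintype.card ((Fin d → ZMod p) ×
        (Fin k → {w : Fin (d + 1) → ZMod p // f w = α}) × (Fin d → ZMod p))
      = q * (Fintype.card {w : Fin (d + 1) → ZMod p // f w = α}) ^ k * q := by
    simp only [Fintype.card_prod, Fintype.card_fun, ZMod.card, Fintype.card_fin]
    ring
  rw [hcl, hcr] at hcard
  have hNlt : Fintype.card {w : Fin (d + 1) → ZMod p // f w = α} < q := hN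
  have hNle : Fintype.card {w : Fin (d + 1) → ZMod p // f w = α} ≤ q - 1 := by omega
  have hle2 : q ^ (k + 1) ≤ q * (q - 1) ^ k * q := by
    calc q ^ (k + 1) ≤ q * (Fintype.card {w : Fin (d + 1) → ZMod p // f w = α}) ^ k * q := hcard
      _ ≤ q * (q - 1) ^ k * q :=
        Nat.mul_le_mul_right _ (Nat.mul_le_mul_left _ (Nat.pow_le_pow_left hNle k))
  obtain ⟨m, hm⟩ : ∃ m, q = m + 2 := ⟨q - 2, by omega⟩
  have hq1 : q - 1 = m + 1 := by omega
  have hk' : k = (m + 1) * (m + 1) + 1 := by rw [hkdef, hq1]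
  have hle3 : (m + 2) ^ ((m + 1) * (m + 1) + 2) ≤ (m + 2) ^ 2 * (m + 1) ^ ((m + 1) * (m + 1) + 1) := by
    calc (m + 2) ^ ((m + 1) * (m + 1) + 2) = q ^ (k + 1) := by rw [hk', hm]
      _ ≤ q * (q - 1) ^ k * q := hle2
      _ = (m + 2) ^ 2 * (m + 1) ^ ((m + 1) * (m + 1) + 1) := by rw [hq1, hm, hk']; ring
  exact absurd hle3 (not_le.mpr (numeric_aux m))

end LRAux


/-- Let `p ≥ 3` be prime and let `F` be an `LR`-separated CA over `ZMod p`
with leftmost position `ℓ` and rightmost position `r`, where `ℓ + 1 < r`, so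
the local rule is `f(x) = aℓ * x_ℓ ^ qℓ + π(x_{ℓ+1},…,x_{r-1}) + ar * x_r ^ qr`
with `aℓ, ar ≠ 0` and `qℓ, qr ≥ 1`.  If `π` is not balanced (it is not the
case that every `α ∈ ZMod p` has exactly `p ^ (r - ℓ - 2)` preimages under
`π`), then `F` is surjective iff `gcd(qℓ, p-1) = 1` or `gcd(qr, p-1) = 1`. -/
theorem LRseparated_nonbalanced_surjective_iff
    (p : ℕ) (hp : p.Prime) (hp3 : 3 ≤ p) (d : ℕ)
    (ℓ r : Fin (d + 1)) (hlr : (ℓ : ℕ) + 1 < (r : ℕ))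
    (aℓ ar : ZMod p) (haℓ : aℓ ≠ 0) (har : ar ≠ 0)
    (qℓ qr : ℕ) (hqℓ : 1 ≤ qℓ) (hqr : 1 ≤ qr)
    (π : ({i : Fin (d + 1) // ℓ < i ∧ i < r} → ZMod p) → ZMod p)
    (hπ : ¬ ∀ α : ZMod p,
      Nat.card {x : {i : Fin (d + 1) // ℓ < i ∧ i < r} → ZMod p // π x = α}
      = p ^ ((r : ℕ) - (ℓ : ℕ) - 2))
    (f : (Fin (d + 1) → ZMod p) → ZMod p)
    (hf : ∀ x, f x = aℓ * x ℓ ^ qℓ + π (fun i => x i.1) + ar * x r ^ qr) :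
    Function.Surjective (globalMap p d f) ↔
      Nat.gcd qℓ (p - 1) = 1 ∨ Nat.gcd qr (p - 1) = 1 := by
  constructor
  · intro hsurj
    by_contra hg
    push_neg at hg
    obtain ⟨h1, h2⟩ := hg
    haveI : Fact p.Prime := ⟨hp⟩
    have hd : 1 ≤ d := by have := r.isLt; omega
    obtain ⟨α, hα⟩ := LRAux.exists_small_fiber hlr haℓ har hqℓ hqr π hπ f hf h1 h2
    exact LRAux.goe hd f α hα hsurj
  · intro h
    rcases h with h | h
    · exact LRAux.surj_left hp hlr haℓ hqℓ π f hf h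
    · exact LRAux.surj_right hp hlr har hqr π f hf h
end

section
/- Let p be a prime with p ≥ 3, let d ≥ 0, and let F be a cellular automaton over ZMod p with totally separated local rule f(x_1,…,x_{d+1}) = Σ_{i=1}^{d+1} a_i x_i^{q_i}, where each q_i ≥ 1. If F is surjective, then there exists an index j with 1 ≤ j ≤ d+1 such that a_j ≠ 0 and gcd(q_j, p−1) = 1. -/
open Polynomial Finset

def blockMap (p d : ℕ) (f : (Fin (d + 1) → ZMod p) → ZMod p) (n : ℕ)
    (x : Fin (n + d) → ZMod p) : Fin n → ZMod p :=
  fun i => f fun k => x ⟨i.val + k.val, by have h1 := i.isLt; have h2 := k.isLt; omega⟩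

lemma blockMap_surjective (p d : ℕ) [NeZero p] (f : (Fin (d + 1) → ZMod p) → ZMod p)
    (hs : Function.Surjective (globalMap p d f)) (n : ℕ) :
    Function.Surjective (blockMap p d f n) := by
  intro w
  obtain ⟨z, hz⟩ := hs (fun i : ℤ => if h : 0 ≤ i ∧ i < (n:ℤ) then w ⟨i.toNat, by omega⟩ else 0)
  refine ⟨fun k => z k.val, ?_⟩
  funext i
  have h1 := congrFun hz (i.val : ℤ)
  simp only [globalMap] at h1
  have h2 : (fun k : Fin (d+1) => z ((i.val : ℤ) + ((k.val : ℕ) : ℤ)))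
      = fun k : Fin (d+1) => z (((i.val + k.val : ℕ) : ℤ)) := by
    funext k
    norm_cast
  rw [h2] at h1
  have h3 : (0 ≤ (i.val:ℤ) ∧ (i.val:ℤ) < (n:ℤ)) := by
    constructor
    · positivity
    · exact_mod_cast i.isLt
  rw [dif_pos h3] at h1
  have h4 : (⟨((i.val:ℤ)).toNat, by omega⟩ : Fin n) = i := by
    apply Fin.ext; simp
  rw [h4] at h1
  exact h1

lemma idx_lt {j k t D : ℕ} (hj : j < k) (ht : t < D) : j * D + t < k * D := by
  calc j * D + t < j * D + D := by omega
  _ = (j + 1) * D := by ring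
  _ ≤ k * D := Nat.mul_le_mul_right D hj

lemma binom_lb (B k' : ℕ) : B ^ (k' + 1) + (k' + 1) * B ^ k' ≤ (B + 1) ^ (k' + 1) := by
  induction k' with
  | zero => simp
  | succ k ih =>
    have h1 : (B + 1) ^ (k + 1 + 1) = (B + 1) ^ (k + 1) * (B + 1) := by ring
    have h2 : (B ^ (k + 1) + (k + 1) * B ^ k) * (B + 1) ≤ (B + 1) ^ (k + 1) * (B + 1) :=
      Nat.mul_le_mul_right _ ih
    have h3 : B ^ (k + 1 + 1) + (k + 1 + 1) * B ^ (k + 1)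
        ≤ (B ^ (k + 1) + (k + 1) * B ^ k) * (B + 1) := by
      calc B ^ (k + 1 + 1) + (k + 1 + 1) * B ^ (k + 1)
          ≤ B ^ (k + 1 + 1) + (k + 1 + 1) * B ^ (k + 1) + (k + 1) * B ^ k := by omega
        _ = (B ^ (k + 1) + (k + 1) * B ^ k) * (B + 1) := by ring
    omega

lemma bijective_of_charSum_eq_zero {p : ℕ} [NeZero p] (hp : p.Prime) (hp3 : 3 ≤ p)
    {ζ : ℂ} (hζ : IsPrimitiveRoot ζ p) (g : ZMod p → ZMod p)
    (h0 : ∑ u : ZMod p, ζ ^ (g u).val = 0) : Function.Bijective g := by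
  set n0 : ℕ := (Finset.univ.filter fun u : ZMod p => g u = 0).card with hn0
  set Po : ℚ[X] := (∑ u : ZMod p, X ^ (g u).val) - C (n0:ℚ) * ∑ i ∈ Finset.range p, X ^ i with hPo
  have hcoeff : ∀ m : ℕ, Po.coeff m =
      ((Finset.univ.filter fun u : ZMod p => (g u).val = m).card : ℚ)
        - n0 * (if m < p then 1 else 0) := by
    intro m
    rw [hPo, Polynomial.coeff_sub, Polynomial.finset_sum_coeff, Polynomial.coeff_C_mul,
      Polynomial.finset_sum_coeff]
    simp only [Polynomial.coeff_X_pow]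
    congr 1
    · rw [Finset.sum_boole]
      congr 2
      apply Finset.filter_congr
      intro u _
      simp [eq_comm]
    · congr 1
      rw [Finset.sum_ite_eq (Finset.range p) m (fun _ => (1:ℚ))]
      simp [Finset.mem_range]
  have hgeom : ∑ i ∈ Finset.range p, ζ ^ i = 0 := hζ.geom_sum_eq_zero (by omega)
  have haeval : Polynomial.aeval ζ Po = 0 := by
    rw [hPo]
    simp only [map_sub, map_sum, map_pow, Polynomial.aeval_X, map_mul, Polynomial.aeval_C]
    rw [hgeom, h0]
    simp
  have hPo0 : Po = 0 := by
    by_contra hne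
    have h1 : minpoly ℚ ζ ∣ Po := minpoly.dvd ℚ ζ haeval
    have hcyc : Polynomial.cyclotomic p ℚ = minpoly ℚ ζ :=
      Polynomial.cyclotomic_eq_minpoly_rat hζ hp.pos
    have hXd : Polynomial.X ∣ Po := by
      rw [Polynomial.X_dvd_iff, hcoeff 0]
      have : (Finset.univ.filter fun u : ZMod p => (g u).val = 0)
          = (Finset.univ.filter fun u : ZMod p => g u = 0) := by
        apply Finset.filter_congr; intro u _; simp [ZMod.val_eq_zero]
      rw [this, if_pos hp.pos]
      simp [hn0]
    obtain ⟨R, hR⟩ := hXd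
    have hcd : Polynomial.cyclotomic p ℚ ∣ Polynomial.X * R := by
      rw [← hR, hcyc]; exact h1
    have hirr : Irreducible (Polynomial.cyclotomic p ℚ) :=
      Polynomial.cyclotomic.irreducible_rat hp.pos
    have hprime : Prime (Polynomial.cyclotomic p ℚ) :=
      (UniqueFactorizationMonoid.irreducible_iff_prime).mp hirr
    have htot : (Polynomial.cyclotomic p ℚ).natDegree = p - 1 := by
      rw [Polynomial.natDegree_cyclotomic, Nat.totient_prime hp]
    rcases hprime.2.2 _ _ hcd with hdX | hdR
    · have := Polynomial.natDegree_le_of_dvd hdX Polynomial.X_ne_zero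
      rw [htot, Polynomial.natDegree_X] at this
      omega
    · have hRne : R ≠ 0 := by
        intro h; rw [h, mul_zero] at hR; exact hne hR
      have hdeg := Polynomial.natDegree_le_of_dvd hdR hRne
      rw [htot] at hdeg
      have hPodeg : Po.natDegree ≤ p - 1 := by
        rw [Polynomial.natDegree_le_iff_coeff_eq_zero]
        intro N hN
        rw [hcoeff N, if_neg (by omega)]
        have : (Finset.univ.filter fun u : ZMod p => (g u).val = N) = ∅ := by
          apply Finset.filter_false_of_mem
          intro u _
          have := ZMod.val_lt (g u)
          omega
        rw [this]
        simp
      have hmul : Po.natDegree = 1 + R.natDegree := by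
        rw [hR, Polynomial.natDegree_mul Polynomial.X_ne_zero hRne, Polynomial.natDegree_X]
      omega
  -- now all fibers have card n0
  have hfib : ∀ c : ZMod p, (Finset.univ.filter fun u : ZMod p => g u = c).card = n0 := by
    intro c
    have h1 := hcoeff c.val
    rw [hPo0, Polynomial.coeff_zero, if_pos (ZMod.val_lt c)] at h1
    have h2 : (Finset.univ.filter fun u : ZMod p => (g u).val = c.val)
        = (Finset.univ.filter fun u : ZMod p => g u = c) := by
      apply Finset.filter_congr; intro u _
      constructor
      · intro h
        have h3 : ((g u).val : ZMod p) = (c.val : ZMod p) := by rw [h]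
        rwa [ZMod.natCast_val, ZMod.natCast_val, ZMod.cast_id, ZMod.cast_id] at h3
      · intro h; rw [h]
    rw [h2] at h1
    have : ((Finset.univ.filter fun u : ZMod p => g u = c).card : ℚ) = (n0 : ℚ) := by
      linarith
    exact_mod_cast this
  -- n0 = 1
  have hsum : p = ∑ c : ZMod p, (Finset.univ.filter fun u : ZMod p => g u = c).card := by
    have := Finset.card_eq_sum_card_fiberwise (f := g) (s := Finset.univ) (t := Finset.univ)
      (fun x _ => Finset.mem_univ _)
    rwa [Finset.card_univ, ZMod.card] at this
  have hn01 : n0 = 1 := by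
    rw [Finset.sum_congr rfl (fun c _ => hfib c), Finset.sum_const, Finset.card_univ,
      ZMod.card, smul_eq_mul] at hsum
    have h2 : p * 1 = p * n0 := by omega
    exact (Nat.eq_of_mul_eq_mul_left hp.pos h2).symm
  have hinj : Function.Injective g := by
    intro u u' huu
    have hm : u ∈ Finset.univ.filter fun v : ZMod p => g v = g u := by
      simp
    have hm' : u' ∈ Finset.univ.filter fun v : ZMod p => g v = g u := by
      simp [huu]
    have hcard : (Finset.univ.filter fun v : ZMod p => g v = g u).card ≤ 1 := by
      rw [hfib (g u), hn01]
    exact Finset.card_le_one.mp hcard u hm u' hm'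
  exact Finite.injective_iff_bijective.mp hinj

lemma exists_heavy_fiber {p : ℕ} [NeZero p] (hp : p.Prime) (hp3 : 3 ≤ p) (d : ℕ)
    (a : Fin (d + 1) → ZMod p) (q : Fin (d + 1) → ℕ) (hq : ∀ i, 1 ≤ q i)
    (f : (Fin (d + 1) → ZMod p) → ZMod p)
    (hf : ∀ x, f x = ∑ i, a i * x i ^ q i)
    (H : ∀ j, a j = 0 ∨ Nat.gcd (q j) (p - 1) ≠ 1) :
    ∃ c0 : ZMod p,
      p ^ d + 1 ≤ (Finset.univ.filter fun x : Fin (d+1) → ZMod p => f x = c0).card := by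
  haveI : Fact (1 < p) := ⟨by omega⟩
  obtain ⟨ζ, hζ⟩ : ∃ ζ : ℂ, IsPrimitiveRoot ζ p :=
    ⟨_, Complex.isPrimitiveRoot_exp p hp.pos.ne'⟩
  have hmod : ∀ m : ℕ, ζ ^ (m % p) = ζ ^ m := by
    intro m
    conv_rhs => rw [← Nat.div_add_mod m p]
    rw [pow_add, pow_mul, hζ.pow_eq_one, one_pow, one_mul]
  have hpow_add : ∀ u v : ZMod p, ζ ^ (u + v).val = ζ ^ u.val * ζ ^ v.val := by
    intro u v
    rw [ZMod.val_add, hmod, pow_add]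
  have hkey : ∀ (s : Finset (Fin (d+1))) (v : Fin (d+1) → ZMod p),
      ζ ^ (∑ j ∈ s, v j).val = ∏ j ∈ s, ζ ^ (v j).val := by
    intro s v
    induction s using Finset.cons_induction with
    | empty => simp
    | cons j s hj ih => rw [Finset.sum_cons, Finset.prod_cons, hpow_add, ih]
  have hgeomZ : ∑ c : ZMod p, ζ ^ c.val = 0 := by
    have h1 : ∑ c : ZMod p, ζ ^ c.val = ∑ i ∈ Finset.range p, ζ ^ i := by
      exact Finset.sum_nbij' (i := fun c => c.val) (j := fun i => (i : ZMod p))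
        (fun c _ => Finset.mem_range.mpr (ZMod.val_lt c))
        (fun i _ => Finset.mem_univ _)
        (fun c _ => by simp [ZMod.natCast_val, ZMod.cast_id])
        (fun i hi => by simp [ZMod.val_cast_of_lt (Finset.mem_range.mp hi)])
        (fun c _ => rfl)
    rw [h1]
    exact hζ.geom_sum_eq_zero (by have := hp.two_le; omega)
  -- the character sum factorizes
  have hTj : ∀ j : Fin (d+1), (∑ u : ZMod p, ζ ^ ((a j * u ^ q j).val)) ≠ 0 := by
    intro j hzero
    have hbij := bijective_of_charSum_eq_zero hp hp3 hζ (fun u => a j * u ^ q j) hzero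
    rcases H j with h | h
    · have h01 : (0 : ZMod p) = 1 := by
        apply hbij.injective
        simp [h]
      have : (1 : ZMod p) ≠ 0 := one_ne_zero
      exact this h01.symm
    · set G := Nat.gcd (q j) (p - 1) with hG
      have hGpos : 0 < G := Nat.gcd_pos_of_pos_left _ (hq j)
      have hG2 : 2 ≤ G := by omega
      have hlp : G.minFac.Prime := Nat.minFac_prime (by omega)
      haveI : Fact (Nat.Prime G.minFac) := ⟨hlp⟩
      have hldvd : G.minFac ∣ Fintype.card (ZMod p)ˣ := by
        rw [ZMod.card_units_eq_totient, Nat.totient_prime hp]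
        exact (Nat.minFac_dvd G).trans (Nat.gcd_dvd_right _ _)
      obtain ⟨ε, hε⟩ := exists_prime_orderOf_dvd_card G.minFac hldvd
      have hεq : ε ^ q j = 1 := by
        rw [← orderOf_dvd_iff_pow_eq_one, hε]
        exact (Nat.minFac_dvd G).trans (Nat.gcd_dvd_left _ _)
      have hεne : (ε : ZMod p) ≠ 1 := by
        intro hh
        have h1 : ε = 1 := Units.ext (by simpa using hh)
        rw [h1, orderOf_one] at hε
        have := hlp.two_le
        omega
      apply hεne
      have := hbij.injective (a₁ := (ε : ZMod p)) (a₂ := 1) ?_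
      · exact this
      · show a j * (ε : ZMod p) ^ q j = a j * (1:ZMod p) ^ q j
        rw [one_pow, ← Units.val_pow_eq_pow_val, hεq, Units.val_one]
  have hT : (∑ x : Fin (d+1) → ZMod p, ζ ^ ((f x).val)) ≠ 0 := by
    have hfact : (∏ j : Fin (d+1), ∑ u : ZMod p, ζ ^ ((a j * u ^ q j).val))
        = ∑ x : Fin (d+1) → ZMod p, ζ ^ ((f x).val) := by
      rw [Finset.prod_univ_sum]
      rw [Fintype.piFinset_univ]
      apply Finset.sum_congr rfl
      intro x _
      rw [hf, hkey]
    rw [← hfact]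
    exact Finset.prod_ne_zero_iff.mpr (fun j _ => hTj j)
  -- conclude
  by_contra hno
  push_neg at hno
  have hno' : ∀ c : ZMod p,
      (Finset.univ.filter fun x : Fin (d+1) → ZMod p => f x = c).card ≤ p ^ d := by
    intro c; have := hno c; omega
  have hcardsum : ∑ c : ZMod p,
      (Finset.univ.filter fun x : Fin (d+1) → ZMod p => f x = c).card = p ^ (d+1) := by
    have := Finset.card_eq_sum_card_fiberwise (f := f) (s := Finset.univ) (t := Finset.univ)
      (fun x _ => Finset.mem_univ _)
    rw [Finset.card_univ, Fintype.card_fun, ZMod.card, Fintype.card_fin] at this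
    omega
  have hall : ∀ c : ZMod p,
      (Finset.univ.filter fun x : Fin (d+1) → ZMod p => f x = c).card = p ^ d := by
    by_contra hc
    push_neg at hc
    obtain ⟨c1, hc1⟩ := hc
    have hlt : (Finset.univ.filter fun x : Fin (d+1) → ZMod p => f x = c1).card < p ^ d := by
      have := hno' c1; omega
    have : ∑ c : ZMod p,
        (Finset.univ.filter fun x : Fin (d+1) → ZMod p => f x = c).card
        < ∑ _c : ZMod p, p ^ d :=
      Finset.sum_lt_sum (fun c _ => hno' c) ⟨c1, Finset.mem_univ c1, hlt⟩
    rw [hcardsum, Finset.sum_const, Finset.card_univ, ZMod.card, smul_eq_mul] at this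
    rw [pow_succ' p d] at this
    omega
  apply hT
  rw [← Finset.sum_fiberwise Finset.univ f (fun x => ζ ^ (f x).val)]
  have : ∀ c : ZMod p, ∑ x ∈ Finset.univ.filter (fun x : Fin (d+1) → ZMod p => f x = c),
      ζ ^ (f x).val = (p:ℂ) ^ d * ζ ^ c.val := by
    intro c
    rw [Finset.sum_congr rfl (g := fun _ => ζ ^ c.val)
      (fun x hx => by rw [(Finset.mem_filter.mp hx).2])]
    rw [Finset.sum_const, hall c, nsmul_eq_mul]
    push_cast
    ring
  rw [Finset.sum_congr rfl (fun c _ => this c), ← Finset.mul_sum, hgeomZ, mul_zero]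

set_option maxHeartbeats 1000000 in
lemma exists_diamond (p d : ℕ) [NeZero p] (hp : 1 < p)
    (f : (Fin (d + 1) → ZMod p) → ZMod p) (c0 : ZMod p)
    (hc0 : p ^ d + 1 ≤ (Finset.univ.filter fun b : Fin (d+1) → ZMod p => f b = c0).card) :
    ∃ n1 : ℕ, 0 < n1 ∧ ∃ x x' : Fin (n1 + d) → ZMod p,
      x ≠ x' ∧ blockMap p d f n1 x = blockMap p d f n1 x' ∧
      (∀ t : Fin (n1 + d), t.val < d → x t = x' t) ∧
      (∀ t : Fin (n1 + d), n1 ≤ t.val → x t = x' t) := by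
  classical
  set K' : ℕ := p ^ (2 * d) - 1 with hK'
  have hKpow : K' + 1 = p ^ (2 * d) := by
    have : 0 < p ^ (2 * d) := Nat.pow_pos (by omega)
    omega
  set K : ℕ := K' + 1 with hK
  set n1 : ℕ := K' * (d + 1) + 1 with hn1
  have hsize : n1 + d = K * (d + 1) := by rw [hn1, hK]; ring
  refine ⟨n1, by omega, ?_⟩
  -- the subtypes
  let β := {b : Fin (d+1) → ZMod p // f b = c0}
  let α := {xx : Fin (n1 + d) → ZMod p //
    ∀ j : Fin K, f (fun t => xx ⟨j.val * (d+1) + t.val,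
      by have := idx_lt j.isLt t.isLt; omega⟩) = c0}
  -- injection from (Fin K → β) into α
  have hdiv_lt : ∀ idx : Fin (n1 + d), idx.val / (d + 1) < K := by
    intro idx
    rw [Nat.div_lt_iff_lt_mul (by omega : 0 < d + 1)]
    have := idx.isLt
    omega
  have e1 : ∀ (j : Fin K) (t : Fin (d+1)) (h : (j.val * (d+1) + t.val) / (d+1) < K),
      (⟨(j.val * (d+1) + t.val) / (d+1), h⟩ : Fin K) = j := by
    intro j t h
    apply Fin.ext
    show (j.val * (d+1) + t.val) / (d+1) = j.val
    rw [mul_comm, Nat.mul_add_div (by omega), Nat.div_eq_of_lt t.isLt]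
    omega
  have e2 : ∀ (j : Fin K) (t : Fin (d+1)) (h : (j.val * (d+1) + t.val) % (d+1) < d+1),
      (⟨(j.val * (d+1) + t.val) % (d+1), h⟩ : Fin (d+1)) = t := by
    intro j t h
    apply Fin.ext
    show (j.val * (d+1) + t.val) % (d+1) = t.val
    rw [mul_comm, Nat.mul_add_mod, Nat.mod_eq_of_lt t.isLt]
  let Ψ : (Fin K → β) → α := fun b =>
    ⟨fun idx => (b ⟨idx.val / (d+1), hdiv_lt idx⟩).val
        ⟨idx.val % (d+1), Nat.mod_lt _ (by omega)⟩, by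
      intro j
      have harg : (fun t : Fin (d+1) =>
          (b ⟨(j.val * (d+1) + t.val) / (d+1), hdiv_lt ⟨j.val * (d+1) + t.val,
              by have := idx_lt j.isLt t.isLt; omega⟩⟩).val
            ⟨(j.val * (d+1) + t.val) % (d+1), Nat.mod_lt _ (by omega)⟩)
          = (b j).val := by
        funext t
        rw [e1 j t _, e2 j t _]
      rw [harg]
      exact (b j).prop⟩
  have hΨinj : Function.Injective Ψ := by
    intro b b' h
    funext j
    apply Subtype.ext
    funext t
    have h1 := congrFun (congrArg Subtype.val h)
      ⟨j.val * (d+1) + t.val, by have := idx_lt j.isLt t.isLt; omega⟩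
    simp only [Ψ] at h1
    rw [e1 j t _, e2 j t _] at h1
    exact h1
  -- classification map
  let σ := ({i : Fin n1 // ¬ (d+1) ∣ i.val} → ZMod p) × (Fin d → ZMod p) × (Fin d → ZMod p)
  let Cl : α → σ := fun xx =>
    (fun i => blockMap p d f n1 xx.val i.val,
     fun t => xx.val ⟨t.val, by have := t.isLt; omega⟩,
     fun t => xx.val ⟨n1 + t.val, by have := t.isLt; omega⟩)
  -- cardinalities
  have hcard_dvd : Fintype.card {i : Fin n1 // (d+1) ∣ i.val} = K := by
    have hbij : Function.Bijective (fun j : Fin K =>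
        (⟨⟨j.val * (d+1), by
            have : j.val ≤ K' := by have := j.isLt; omega
            have h2 := Nat.mul_le_mul_right (d+1) this
            omega⟩, ⟨j.val, mul_comm _ _⟩⟩ : {i : Fin n1 // (d+1) ∣ i.val})) := by
      constructor
      · intro j j' h
        have h1 : j.val * (d+1) = j'.val * (d+1) := congrArg (fun z => z.val.val) h
        exact Fin.ext (Nat.eq_of_mul_eq_mul_right (by omega) h1)
      · rintro ⟨⟨i, hi⟩, c, hc⟩
        have hcK : c < K := by
          have h1 : (d+1) * c ≤ K' * (d+1) := by omega
          rw [mul_comm] at h1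
          have := Nat.le_of_mul_le_mul_right h1 (by omega : 0 < d + 1)
          omega
        refine ⟨⟨c, hcK⟩, Subtype.ext (Fin.ext ?_)⟩
        show c * (d + 1) = i
        have hc' : i = (d + 1) * c := hc
        rw [hc', mul_comm]
    rw [← Fintype.card_fin K]
    exact (Fintype.card_of_bijective hbij).symm
  have hcard_nd : Fintype.card {i : Fin n1 // ¬ (d+1) ∣ i.val} = n1 - K := by
    rw [Fintype.card_subtype_compl, hcard_dvd, Fintype.card_fin]
  have hcard_σ : Fintype.card σ = p ^ (d * K + d) := by
    have hcompl : n1 - K = K' * d := by rw [hn1, hK]; ring_nf; omega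
    show Fintype.card (({i : Fin n1 // ¬ (d+1) ∣ i.val} → ZMod p)
      × (Fin d → ZMod p) × (Fin d → ZMod p)) = p ^ (d * K + d)
    rw [Fintype.card_prod, Fintype.card_prod, Fintype.card_fun, Fintype.card_fun,
      hcard_nd, ZMod.card, Fintype.card_fin, hcompl, ← pow_add, ← pow_add]
    congr 1
    simp only [hK]
    ring
  have hcard_α : p ^ (d * K + d) < Fintype.card α := by
    have h1 : Fintype.card (Fin K → β) ≤ Fintype.card α :=
      Fintype.card_le_of_injective Ψ hΨinj
    have h2 : Fintype.card (Fin K → β) = (Fintype.card β) ^ K := by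
      rw [Fintype.card_fun, Fintype.card_fin]
    have h3 : p ^ d + 1 ≤ Fintype.card β := by
      show p ^ d + 1 ≤ Fintype.card {b : Fin (d+1) → ZMod p // f b = c0}
      rw [Fintype.card_subtype]
      exact hc0
    have h4 : (p ^ d + 1) ^ K ≤ (Fintype.card β) ^ K := Nat.pow_le_pow_left h3 K
    have h5 : p ^ (d * K + d) < (p ^ d + 1) ^ K := by
      show p ^ (d * (K' + 1) + d) < (p ^ d + 1) ^ (K' + 1)
      have hb := binom_lb (p ^ d) K'
      have e2 : (K' + 1) * (p ^ d) ^ K' = p ^ (d * (K' + 1) + d) := by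
        calc (K' + 1) * (p ^ d) ^ K' = (K' + 1) * p ^ (d * K') := by rw [← pow_mul]
          _ = p ^ (2 * d) * p ^ (d * K') := by
              rw [show K' + 1 = p ^ (2 * d) from hKpow]
          _ = p ^ (2 * d + d * K') := by rw [← pow_add]
          _ = p ^ (d * (K' + 1) + d) := by congr 1; ring
      rw [e2, ← pow_mul] at hb
      have hpos : 0 < p ^ (d * (K' + 1)) := Nat.pow_pos (by omega)
      omega
    omega
  obtain ⟨xt, yt, hne, hCl⟩ := Fintype.exists_ne_map_eq_of_card_lt Cl (by rw [hcard_σ]; exact hcard_α)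
  refine ⟨xt.val, yt.val, fun h => hne (Subtype.ext h), ?_, ?_, ?_⟩
  · -- full image equality
    have hc1 := congrArg Prod.fst hCl
    funext i
    by_cases hdvd : (d+1) ∣ i.val
    · obtain ⟨c, hc⟩ := hdvd
      have hcK : c < K := by
        have hin1 := i.isLt
        have h1 : (d+1) * c ≤ K' * (d+1) := by omega
        rw [mul_comm] at h1
        have := Nat.le_of_mul_le_mul_right h1 (by omega : 0 < d + 1)
        omega
      have harg : ∀ (z : Fin (n1+d) → ZMod p),
          blockMap p d f n1 z i = f (fun t => z ⟨c * (d+1) + t.val,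
            by have h9 := idx_lt hcK t.isLt; omega⟩) := by
        intro z
        show f _ = f _
        congr 1
        funext t
        congr 1
        apply Fin.ext
        show i.val + t.val = c * (d+1) + t.val
        rw [hc, mul_comm]
      have hx : f (fun t : Fin (d+1) => xt.val ⟨c * (d+1) + t.val,
          by have h9 := idx_lt hcK t.isLt; omega⟩) = c0 := xt.prop ⟨c, hcK⟩
      have hy : f (fun t : Fin (d+1) => yt.val ⟨c * (d+1) + t.val,
          by have h9 := idx_lt hcK t.isLt; omega⟩) = c0 := yt.prop ⟨c, hcK⟩
      rw [harg xt.val, harg yt.val, hx, hy]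
    · exact congrFun hc1 ⟨i, hdvd⟩
  · intro t ht
    have hc2 := congrArg (fun z : σ => z.2.1) hCl
    have := congrFun hc2 ⟨t.val, ht⟩
    simpa [Cl, Fin.ext_iff] using this
  · intro t ht
    have hc3 := congrArg (fun z : σ => z.2.2) hCl
    have hs : t.val - n1 < d := by have := t.isLt; omega
    have := congrFun hc3 ⟨t.val - n1, hs⟩
    simp only [Cl] at this
    rwa [show (⟨n1 + (t.val - n1), by omega⟩ : Fin (n1 + d)) = t from
      Fin.ext (show n1 + (t.val - n1) = t.val by omega)] at this

def segm (p N L r : ℕ) (h : N = r * L) (v : Fin N → ZMod p) (j : Fin r) (t : Fin L) : ZMod p :=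
  v ⟨j.val * L + t.val, by have := idx_lt j.isLt t.isLt; omega⟩


lemma moore_bound (p L d : ℕ) (hp : 2 ≤ p) (hL : 1 ≤ L) :
    (p ^ L - 1) ^ (p ^ L * (d * p + 1)) * p ^ d < p ^ (L * (p ^ L * (d * p + 1))) := by
  have hA2 : 2 ≤ p ^ L := by
    calc 2 ≤ p := hp
    _ = p ^ 1 := (pow_one p).symm
    _ ≤ p ^ L := Nat.pow_le_pow_right (by omega) hL
  have h2A : 2 * (p ^ L - 1) ^ (p ^ L) ≤ (p ^ L) ^ (p ^ L) := by
    obtain ⟨A', hA⟩ : ∃ A', p ^ L = A' + 1 := ⟨p ^ L - 1, by omega⟩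
    rw [hA]
    simp only [Nat.add_sub_cancel]
    have hb := binom_lb A' A'
    have h1 : A' ^ (A' + 1) ≤ (A' + 1) * A' ^ A' := by
      rw [pow_succ']
      exact Nat.mul_le_mul_right _ (by omega)
    omega
  have hs2 : p ^ d < 2 ^ (d * p + 1) := by
    have h1 : p ^ d ≤ (2 ^ p) ^ d := Nat.pow_le_pow_left (Nat.lt_two_pow_self (n := p)).le d
    have h1' : p ^ d ≤ 2 ^ (d * p) := by
      rw [← pow_mul, Nat.mul_comm p d] at h1
      exact h1
    have h2 : 2 ^ (d * p + 1) = 2 * 2 ^ (d * p) := pow_succ' 2 (d * p)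
    have h3 : 0 < 2 ^ (d * p) := Nat.pow_pos (by omega)
    omega
  have hpos1 : 0 < (p ^ L - 1) ^ (p ^ L * (d * p + 1)) :=
    Nat.pow_pos (by omega)
  calc (p ^ L - 1) ^ (p ^ L * (d * p + 1)) * p ^ d
      < (p ^ L - 1) ^ (p ^ L * (d * p + 1)) * 2 ^ (d * p + 1) :=
        mul_lt_mul_of_pos_left hs2 hpos1
    _ = ((p ^ L - 1) ^ (p ^ L)) ^ (d * p + 1) * 2 ^ (d * p + 1) := by rw [← pow_mul]
    _ = (2 * (p ^ L - 1) ^ (p ^ L)) ^ (d * p + 1) := by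
        rw [mul_pow]
        exact Nat.mul_comm _ _
    _ ≤ ((p ^ L) ^ (p ^ L)) ^ (d * p + 1) := Nat.pow_le_pow_left h2A _
    _ = p ^ (L * (p ^ L * (d * p + 1))) := by
        rw [← pow_mul, ← pow_mul]


set_option maxHeartbeats 1000000 in
lemma not_surj_of_diamond (p d : ℕ) [NeZero p] (hp2 : 2 ≤ p)
    (f : (Fin (d + 1) → ZMod p) → ZMod p) (n1 : ℕ) (hn1 : 0 < n1)
    (x x' : Fin (n1 + d) → ZMod p)
    (hnex : x ≠ x') (hBl : blockMap p d f n1 x = blockMap p d f n1 x')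
    (hpre : ∀ t : Fin (n1 + d), t.val < d → x t = x' t)
    (hsuf : ∀ t : Fin (n1 + d), n1 ≤ t.val → x t = x' t)
    (hsurjB : ∀ n, Function.Surjective (blockMap p d f n)) : False := by
  classical
  have hLpos : 0 < n1 + d := by omega
  set r : ℕ := p ^ (n1 + d) * (d * p + 1) with hrdef
  have hr : 0 < r := by
    have h9 : 0 < p ^ (n1 + d) := Nat.pow_pos (by omega)
    positivity
  have hLr : n1 + d ≤ r * (n1 + d) := by
    have h9 := Nat.mul_le_mul_right (n1 + d) (show 1 ≤ r from hr)
    omega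
  set nM : ℕ := r * (n1 + d) - d with hnMdef
  have hnM' : nM + d = r * (n1 + d) := by omega
  have hdiv_lt : ∀ idx : Fin (nM + d), idx.val / (n1 + d) < r := by
    intro idx
    rw [Nat.div_lt_iff_lt_mul hLpos]
    have := idx.isLt
    omega
  have hdm_div : ∀ (j s : ℕ), s < n1 + d → (j * (n1 + d) + s) / (n1 + d) = j := by
    intro j s hs
    rw [mul_comm, Nat.mul_add_div hLpos, Nat.div_eq_of_lt hs]
    omega
  have hdm_mod : ∀ (j s : ℕ), s < n1 + d → (j * (n1 + d) + s) % (n1 + d) = s := by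
    intro j s hs
    rw [mul_comm, Nat.mul_add_mod, Nat.mod_eq_of_lt hs]
  have hfd : ∀ (m : ℕ) (J : Fin r) (hm : m / (n1 + d) < r), m / (n1 + d) = J.val →
      (⟨m / (n1 + d), hm⟩ : Fin r) = J := fun m J hm h => Fin.ext h
  let repl : (Fin (nM + d) → ZMod p) → (Fin (nM + d) → ZMod p) := fun v idx =>
    if segm p (nM + d) (n1 + d) r hnM' v ⟨idx.val / (n1 + d), hdiv_lt idx⟩ = x'
    then x ⟨idx.val % (n1 + d), Nat.mod_lt _ hLpos⟩ else v idx
  -- boundary letters are unchanged by repl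
  have hrepl_eq : ∀ (v : Fin (nM + d) → ZMod p) (idx : Fin (nM + d)),
      (idx.val % (n1 + d) < d ∨ n1 ≤ idx.val % (n1 + d)) → repl v idx = v idx := by
    intro v idx hcond
    simp only [repl]
    split_ifs with h
    · have hagree : x ⟨idx.val % (n1 + d), Nat.mod_lt _ hLpos⟩
          = x' ⟨idx.val % (n1 + d), Nat.mod_lt _ hLpos⟩ := by
        rcases hcond with h1 | h1
        · exact hpre ⟨idx.val % (n1 + d), Nat.mod_lt _ hLpos⟩ h1
        · exact hsuf ⟨idx.val % (n1 + d), Nat.mod_lt _ hLpos⟩ h1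
      rw [hagree, ← h]
      refine congrArg v (Fin.ext ?_)
      show (idx.val / (n1 + d)) * (n1 + d) + idx.val % (n1 + d) = idx.val
      have h9 := Nat.div_add_mod idx.val (n1 + d)
      have h10 : (n1 + d) * (idx.val / (n1 + d)) = (idx.val / (n1 + d)) * (n1 + d) :=
        Nat.mul_comm _ _
      omega
    · rfl
  -- segments of repl
  have hsegrepl : ∀ (v : Fin (nM + d) → ZMod p) (j : Fin r),
      segm p (nM + d) (n1 + d) r hnM' (repl v) j
        = if segm p (nM + d) (n1 + d) r hnM' v j = x'
          then x else segm p (nM + d) (n1 + d) r hnM' v j := by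
    intro v j
    funext t
    show repl v ⟨j.val * (n1 + d) + t.val, _⟩ = _
    simp only [repl]
    rw [hfd (j.val * (n1 + d) + t.val) j _ (hdm_div j.val t.val t.isLt)]
    by_cases h : segm p (nM + d) (n1 + d) r hnM' v j = x'
    · rw [if_pos h, if_pos h]
      exact congrArg x (Fin.ext (hdm_mod j.val t.val t.isLt))
    · rw [if_neg h, if_neg h]
      rfl
  have hreplD : ∀ (v : Fin (nM + d) → ZMod p) (j : Fin r),
      segm p (nM + d) (n1 + d) r hnM' (repl v) j ≠ x' := by
    intro v j
    rw [hsegrepl]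
    by_cases h : segm p (nM + d) (n1 + d) r hnM' v j = x'
    · rw [if_pos h]; exact hnex
    · rw [if_neg h]; exact h
  -- images are equal
  have himg : ∀ v, blockMap p d f nM (repl v) = blockMap p d f nM v := by
    intro v
    funext i
    have h9 := Nat.div_add_mod i.val (n1 + d)
    have h10 : (n1 + d) * (i.val / (n1 + d)) = (i.val / (n1 + d)) * (n1 + d) :=
      Nat.mul_comm _ _
    set J := i.val / (n1 + d) with hJ
    set off := i.val % (n1 + d) with hoff
    have hoffL : off < n1 + d := Nat.mod_lt _ hLpos
    have hJr : J < r := by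
      rw [hJ, Nat.div_lt_iff_lt_mul hLpos]
      have h8 := i.isLt
      omega
    by_cases hcase : off + d < n1 + d
    · -- window lies inside segment J
      have hwin_div : ∀ t : Fin (d+1), (i.val + t.val) / (n1 + d) = J := by
        intro t
        have h8 : i.val + t.val = J * (n1 + d) + (off + t.val) := by omega
        rw [h8]
        exact hdm_div _ _ (by have := t.isLt; omega)
      have hwin_mod : ∀ t : Fin (d+1), (i.val + t.val) % (n1 + d) = off + t.val := by
        intro t
        have h8 : i.val + t.val = J * (n1 + d) + (off + t.val) := by omega
        rw [h8]
        exact hdm_mod _ _ (by have := t.isLt; omega)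
      have hoffn1 : off < n1 := by omega
      by_cases hrep : segm p (nM + d) (n1 + d) r hnM' v ⟨J, hJr⟩ = x'
      · have h1 : blockMap p d f nM (repl v) i = blockMap p d f n1 x ⟨off, hoffn1⟩ := by
          apply congrArg f
          funext t
          show repl v ⟨i.val + t.val, _⟩ = x ⟨off + t.val, _⟩
          simp only [repl]
          rw [hfd (i.val + t.val) ⟨J, hJr⟩ _ (hwin_div t), if_pos hrep]
          exact congrArg x (Fin.ext (hwin_mod t))
        have h2 : blockMap p d f nM v i = blockMap p d f n1 x' ⟨off, hoffn1⟩ := by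
          apply congrArg f
          funext t
          show v ⟨i.val + t.val, _⟩ = x' ⟨off + t.val, _⟩
          have h3 : v ⟨i.val + t.val, by have := i.isLt; have := t.isLt; omega⟩
              = segm p (nM + d) (n1 + d) r hnM' v ⟨J, hJr⟩
                ⟨off + t.val, by have := t.isLt; omega⟩ := by
            refine congrArg v (Fin.ext ?_)
            show i.val + t.val = J * (n1 + d) + (off + t.val)
            omega
          exact h3.trans (congrFun hrep _)
        rw [h1, h2]
        exact congrFun hBl ⟨off, hoffn1⟩
      · apply congrArg f
        funext t
        show repl v ⟨i.val + t.val, _⟩ = v ⟨i.val + t.val, _⟩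
        simp only [repl]
        rw [hfd (i.val + t.val) ⟨J, hJr⟩ _ (hwin_div t), if_neg hrep]
    · -- window straddles a boundary: every letter is unchanged
      apply congrArg f
      funext t
      apply hrepl_eq
      have ht := t.isLt
      by_cases hsp : off + t.val < n1 + d
      · right
        show n1 ≤ (i.val + t.val) % (n1 + d)
        have h8 : i.val + t.val = J * (n1 + d) + (off + t.val) := by omega
        rw [h8, hdm_mod _ _ hsp]
        omega
      · left
        show (i.val + t.val) % (n1 + d) < d
        have h8 : i.val + t.val = (J + 1) * (n1 + d) + (off + t.val - (n1 + d)) := by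
          have h7 : (J + 1) * (n1 + d) = J * (n1 + d) + (n1 + d) := by ring
          omega
        rw [h8, hdm_mod _ _ (by omega)]
        omega
  -- counting
  have hsurjD : Function.Surjective
      (fun v : {v : Fin (nM + d) → ZMod p //
          ∀ j : Fin r, segm p (nM + d) (n1 + d) r hnM' v j ≠ x'} =>
        blockMap p d f nM v.val) := by
    intro w
    obtain ⟨v, hv⟩ := hsurjB nM w
    refine ⟨⟨repl v, hreplD v⟩, ?_⟩
    show blockMap p d f nM (repl v) = w
    rw [himg v]
    exact hv
  have hcard1 : Fintype.card (Fin nM → ZMod p)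
      ≤ Fintype.card {v : Fin (nM + d) → ZMod p //
          ∀ j : Fin r, segm p (nM + d) (n1 + d) r hnM' v j ≠ x'} :=
    Fintype.card_le_of_surjective _ hsurjD
  have hι : Function.Injective
      (fun (v : {v : Fin (nM + d) → ZMod p //
          ∀ j : Fin r, segm p (nM + d) (n1 + d) r hnM' v j ≠ x'})
        (j : Fin r) => (⟨segm p (nM + d) (n1 + d) r hnM' v.val j, v.prop j⟩
          : {y : Fin (n1 + d) → ZMod p // y ≠ x'})) := by
    intro v v' h
    apply Subtype.ext
    funext idx
    have h1 := congrArg (fun z => (z (⟨idx.val / (n1 + d), hdiv_lt idx⟩ : Fin r)).val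
      (⟨idx.val % (n1 + d), Nat.mod_lt _ hLpos⟩ : Fin (n1 + d))) h
    simp only at h1
    have e : ∀ z : Fin (nM + d) → ZMod p,
        segm p (nM + d) (n1 + d) r hnM' z ⟨idx.val / (n1 + d), hdiv_lt idx⟩
          ⟨idx.val % (n1 + d), Nat.mod_lt _ hLpos⟩ = z idx := by
      intro z
      refine congrArg z (Fin.ext ?_)
      show (idx.val / (n1 + d)) * (n1 + d) + idx.val % (n1 + d) = idx.val
      have h9 := Nat.div_add_mod idx.val (n1 + d)
      have h10 : (n1 + d) * (idx.val / (n1 + d)) = (idx.val / (n1 + d)) * (n1 + d) :=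
        Nat.mul_comm _ _
      omega
    rw [e v.val, e v'.val] at h1
    exact h1
  have hcard_ne : Fintype.card {y : Fin (n1 + d) → ZMod p // y ≠ x'} = p ^ (n1 + d) - 1 := by
    have h1 : Fintype.card {y : Fin (n1 + d) → ZMod p // ¬ (y = x')}
        = Fintype.card (Fin (n1 + d) → ZMod p)
          - Fintype.card {y : Fin (n1 + d) → ZMod p // y = x'} :=
      Fintype.card_subtype_compl _
    rw [Fintype.card_subtype_eq, Fintype.card_fun, ZMod.card, Fintype.card_fin] at h1
    exact h1
  have hcard2 : Fintype.card {v : Fin (nM + d) → ZMod p //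
      ∀ j : Fin r, segm p (nM + d) (n1 + d) r hnM' v j ≠ x'} ≤ (p ^ (n1 + d) - 1) ^ r := by
    have h1 := Fintype.card_le_of_injective _ hι
    rwa [Fintype.card_fun, Fintype.card_fin, hcard_ne] at h1
  have hfin : p ^ nM ≤ (p ^ (n1 + d) - 1) ^ r := by
    have h1 : Fintype.card (Fin nM → ZMod p) = p ^ nM := by
      rw [Fintype.card_fun, ZMod.card, Fintype.card_fin]
    omega
  have hbound := moore_bound p (n1 + d) d hp2 (by omega)
  rw [← hrdef] at hbound
  have hexp : p ^ ((n1 + d) * r) = p ^ nM * p ^ d := by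
    rw [← pow_add]
    congr 1
    have h9 : r * (n1 + d) = (n1 + d) * r := Nat.mul_comm _ _
    omega
  rw [hexp] at hbound
  have hlt : (p ^ (n1 + d) - 1) ^ r < p ^ nM :=
    Nat.lt_of_mul_lt_mul_right hbound
  omega


/-- Let `p ≥ 3` be prime and let `F` be a CA over `ZMod p` with totally
separated local rule `f(x) = Σ_i a_i x_i ^ q_i`, where each `q_i ≥ 1`.  If `F`
is surjective, then there is an index `j` with `a j ≠ 0` and
`gcd(q j, p - 1) = 1`. -/
theorem totallySeparated_surjective_exists_coprime_exponent
    (p : ℕ) (hp : p.Prime) (hp3 : 3 ≤ p) (d : ℕ)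
    (a : Fin (d + 1) → ZMod p) (q : Fin (d + 1) → ℕ)
    (hq : ∀ i, 1 ≤ q i)
    (f : (Fin (d + 1) → ZMod p) → ZMod p)
    (hf : ∀ x, f x = ∑ i, a i * x i ^ q i)
    (hsurj : Function.Surjective (globalMap p d f)) :
    ∃ j : Fin (d + 1), a j ≠ 0 ∧ Nat.gcd (q j) (p - 1) = 1 := by
  by_contra hcon
  push_neg at hcon
  haveI : NeZero p := ⟨by omega⟩
  have H : ∀ j, a j = 0 ∨ Nat.gcd (q j) (p - 1) ≠ 1 := by
    intro j
    by_cases h : a j = 0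
    · exact Or.inl h
    · exact Or.inr (hcon j h)
  obtain ⟨c0, hc0⟩ := exists_heavy_fiber hp hp3 d a q hq f hf H
  obtain ⟨n1, hn1, x, x', hne, hBl, hpre, hsuf⟩ := exists_diamond p d (by omega) f c0 hc0
  exact not_surj_of_diamond p d (by omega) f n1 hn1 x x' hne hBl hpre hsuf
    (blockMap_surjective p d f hsurj)
end

section
/- Let m ≥ 3 be an integer and let F be an LR-separated cellular automaton over ZMod m with leftmost position ℓ and rightmost position r satisfying ℓ < r, so the local rule is f(x_1,…,x_{d+1}) = a_ℓ x_ℓ^{q_ℓ} + π(x_{ℓ+1},…,x_{r−1}) + a_r x_r^{q_r} with a_ℓ, a_r ≠ 0 and q_ℓ, q_r ≥ 1. If F is permutive at position ℓ and permutive at position r, then F is not injective. -/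
/-- The CA with local rule `f` is permutive at position `j` if, for every
choice of fixed values of the other `d` coordinates, the one-variable map
`a ↦ f(x_1,…,x_{j-1}, a, x_{j+1},…,x_{d+1})` is a bijection of `ZMod m`. -/
def PermutiveAt (m d : ℕ) (f : (Fin (d + 1) → ZMod m) → ZMod m)
    (j : Fin (d + 1)) : Prop :=
  ∀ x : Fin (d + 1) → ZMod m,
    Function.Bijective fun a : ZMod m => f (Function.update x j a)

/-!
Fix a value `c`. Since `f` only sees the coordinates `ℓ, …, r` and is permutive at both ends,
the map sending a window `(x_ℓ, …, x_{r-1})` to `(x_{ℓ+1}, …, x_r)`, where `x_r` is the unique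
value making the local rule equal to `c`, is a permutation of `(ZMod m)^{r-ℓ}`: its inverse
solves for `x_ℓ` instead. Iterating it forwards and backwards extends every window to a
configuration that `F` maps to the constant configuration `c`, so two different windows give
two different preimages of the same point.
-/

open Function Set

variable {α : Type*} {n : ℕ}

def IsBipermutive (φ : (Fin (n + 1) → α) → α) : Prop :=
  (∀ w, Bijective fun a => φ (Fin.cons a w)) ∧ ∀ w, Bijective fun a => φ (Fin.snoc w a)

namespace IsBipermutive

variable {φ : (Fin (n + 1) → α) → α}

noncomputable def extendRight (hφ : IsBipermutive φ) (c : α) (w : Fin n → α) :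
    Fin (n + 1) → α :=
  Fin.snoc w ((Equiv.ofBijective _ (hφ.2 w)).symm c)

noncomputable def extendLeft (hφ : IsBipermutive φ) (c : α) (w : Fin n → α) :
    Fin (n + 1) → α :=
  Fin.cons ((Equiv.ofBijective _ (hφ.1 w)).symm c) w

theorem apply_extendRight (hφ : IsBipermutive φ) (c : α) (w : Fin n → α) :
    φ (hφ.extendRight c w) = c :=
  (Equiv.ofBijective _ (hφ.2 w)).apply_symm_apply c

theorem apply_extendLeft (hφ : IsBipermutive φ) (c : α) (w : Fin n → α) :
    φ (hφ.extendLeft c w) = c :=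
  (Equiv.ofBijective _ (hφ.1 w)).apply_symm_apply c

theorem extendRight_init (hφ : IsBipermutive φ) {c : α} {v : Fin (n + 1) → α}
    (hv : φ v = c) :
    hφ.extendRight c (Fin.init v) = v := by
  conv_rhs => rw [← Fin.snoc_init_self v]
  rw [extendRight]
  congr 1
  rw [Equiv.symm_apply_eq]
  simpa [Fin.snoc_init_self] using hv.symm

theorem extendLeft_tail (hφ : IsBipermutive φ) {c : α} {v : Fin (n + 1) → α}
    (hv : φ v = c) :
    hφ.extendLeft c (Fin.tail v) = v := by
  conv_rhs => rw [← Fin.cons_self_tail v]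
  rw [extendLeft]
  congr 1
  rw [Equiv.symm_apply_eq]
  simpa [Fin.cons_self_tail] using hv.symm

noncomputable def windowShift (hφ : IsBipermutive φ) (c : α) : Equiv.Perm (Fin n → α) where
  toFun w := Fin.tail (hφ.extendRight c w)
  invFun w := Fin.init (hφ.extendLeft c w)
  left_inv w := by
    dsimp only
    rw [hφ.extendLeft_tail (hφ.apply_extendRight c w), extendRight, Fin.init_snoc]
  right_inv w := by
    dsimp only
    rw [hφ.extendRight_init (hφ.apply_extendLeft c w), extendLeft, Fin.tail_cons]

theorem exists_extension_forall_apply_eq (hφ : IsBipermutive φ) (c : α) (w : Fin n → α) :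
    ∃ x : ℤ → α, (∀ k : Fin n, x (k : ℕ) = w k) ∧ ∀ p : ℤ, φ (fun k => x (p + (k : ℕ))) = c := by
  set T := hφ.windowShift c
  -- `U p` will be the window of the configuration at `p`; negative powers of `T` fill the left.
  set U : ℤ → Fin (n + 1) → α := fun p => hφ.extendRight c ((T ^ p) w)
  have hshift (p : ℤ) (k : Fin n) : U p k.succ = U (p + 1) k.castSucc := by
    have hT : (T ^ (p + 1)) w = T ((T ^ p) w) := by
      rw [add_comm, zpow_add, zpow_one, Equiv.Perm.mul_apply]
    simp only [U, hT, extendRight, Fin.snoc_castSucc]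
    rfl
  have hwindow (k : Fin (n + 1)) : ∀ p, U (p + (k : ℕ)) 0 = U p k := by
    induction k using Fin.induction with
    | zero => simp
    | succ k ih =>
      intro p
      rw [hshift, ← ih]
      congr 1
      simp only [Fin.val_succ, Fin.val_castSucc]
      push_cast
      ring
  refine ⟨fun p => U p 0, fun k => ?_, fun p => ?_⟩
  · have hk := hwindow k.castSucc 0
    simp only [Fin.val_castSucc, zero_add] at hk
    exact hk.trans (by simp [U, extendRight])
  · simp only [hwindow]
    exact hφ.apply_extendRight c _

theorem exists_ne_forall_apply_eq [Nontrivial α] (hφ : IsBipermutive φ) (hn : 0 < n) (c : α) :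
    ∃ x y : ℤ → α, x ≠ y ∧ (∀ p : ℤ, φ (fun k => x (p + (k : ℕ))) = c) ∧
      ∀ p : ℤ, φ (fun k => y (p + (k : ℕ))) = c := by
  obtain ⟨a, b, hab⟩ := exists_pair_ne α
  obtain ⟨x, hxa, hx⟩ := hφ.exists_extension_forall_apply_eq c fun _ => a
  obtain ⟨y, hyb, hy⟩ := hφ.exists_extension_forall_apply_eq c fun _ => b
  refine ⟨x, y, fun hxy => hab ?_, hx, hy⟩
  rw [← hxa ⟨0, hn⟩, ← hyb ⟨0, hn⟩, hxy]

end IsBipermutive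

/-- Outside `Icc ℓ r` the window is clipped to its end values, which is harmless for rules
depending only on `Icc ℓ r`. -/
def embedWindow {d : ℕ} (ℓ r : Fin (d + 1)) (v : Fin ((r : ℕ) - ℓ + 1) → α) :
    Fin (d + 1) → α :=
  fun k => v ⟨min ((k : ℕ) - ℓ) ((r : ℕ) - ℓ), by omega⟩

section EmbedWindow

variable {d : ℕ} {ℓ r k : Fin (d + 1)}

theorem embedWindow_apply_of_mem (v : Fin ((r : ℕ) - ℓ + 1) → α) (hk : k ∈ Icc ℓ r) :
    embedWindow ℓ r v k = v ⟨(k : ℕ) - ℓ, Nat.lt_succ_of_le (Nat.sub_le_sub_right hk.2 _)⟩ := by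
  simp only [embedWindow, min_eq_left (Nat.sub_le_sub_right hk.2 _)]

theorem embedWindow_update_apply_of_mem (v : Fin ((r : ℕ) - ℓ + 1) → α) {p : Fin (d + 1)}
    {j : Fin ((r : ℕ) - ℓ + 1)} (hp : p ∈ Icc ℓ r) (hj : (j : ℕ) = p - ℓ) (a : α)
    (hk : k ∈ Icc ℓ r) :
    embedWindow ℓ r (update v j a) k = update (embedWindow ℓ r v) p a k := by
  rw [embedWindow_apply_of_mem _ hk]
  by_cases hkp : k = p
  · subst hkp
    rw [show (⟨(k : ℕ) - ℓ, _⟩ : Fin _) = j from Fin.ext hj.symm, update_self, update_self]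
  · rw [update_of_ne hkp, embedWindow_apply_of_mem _ hk, update_of_ne]
    simp only [mem_Icc, Fin.le_def, Ne, Fin.ext_iff] at hp hk hkp ⊢
    omega

end EmbedWindow

section CellularAutomaton

variable {m d : ℕ} {f : (Fin (d + 1) → ZMod m) → ZMod m} {ℓ r : Fin (d + 1)}

theorem globalMap_apply_eq_embedWindow (hdep : DependsOn f (Icc ℓ r)) (x : ℤ → ZMod m) (i : ℤ) :
    globalMap m d f x i = f (embedWindow ℓ r fun j => x (i + (ℓ : ℕ) + (j : ℕ))) := by
  refine hdep fun k hk => ?_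
  rw [embedWindow_apply_of_mem _ hk]
  have hℓk : (ℓ : ℕ) ≤ k := hk.1
  push_cast [hℓk]
  ring_nf

theorem isBipermutive_embedWindow (hdep : DependsOn f (Icc ℓ r)) (hlr : ℓ ≤ r)
    (hℓ : PermutiveAt m d f ℓ) (hr : PermutiveAt m d f r) :
    IsBipermutive fun v => f (embedWindow ℓ r v) := by
  refine ⟨fun w => ?_, fun w => ?_⟩
  · convert hℓ (embedWindow ℓ r (Fin.cons 0 w)) using 2 with a
    rw [← Fin.update_cons_zero (α := fun _ => ZMod m) 0 w a]
    exact hdep fun k hk =>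
      embedWindow_update_apply_of_mem _ (left_mem_Icc.2 hlr) (Nat.sub_self _).symm a hk
  · convert hr (embedWindow ℓ r (Fin.snoc w 0)) using 2 with a
    rw [← Fin.update_snoc_last (α := fun _ => ZMod m) 0 w a]
    exact hdep fun k hk => embedWindow_update_apply_of_mem _ (right_mem_Icc.2 hlr) rfl a hk

theorem not_injective_globalMap_of_permutiveAt [Nontrivial (ZMod m)] (hlr : ℓ < r)
    (hdep : DependsOn f (Icc ℓ r)) (hℓ : PermutiveAt m d f ℓ) (hr : PermutiveAt m d f r) :
    ¬ Injective (globalMap m d f) := by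
  have hφ := isBipermutive_embedWindow hdep hlr.le hℓ hr
  obtain ⟨x, y, hxy, hx, hy⟩ := hφ.exists_ne_forall_apply_eq (Nat.sub_pos_of_lt hlr) 0
  refine fun hinj => hxy (hinj (funext fun i => ?_))
  rw [globalMap_apply_eq_embedWindow hdep, globalMap_apply_eq_embedWindow hdep]
  exact (hx _).trans (hy _).symm

end CellularAutomaton

theorem LRseparated_bipermutive_not_injective_general
    (m : ℕ) (hm : 3 ≤ m) (d : ℕ)
    (ℓ r : Fin (d + 1)) (hlr : ℓ < r)
    (aℓ ar : ZMod m)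
    (qℓ qr : ℕ)
    (π : ({i : Fin (d + 1) // ℓ < i ∧ i < r} → ZMod m) → ZMod m)
    (f : (Fin (d + 1) → ZMod m) → ZMod m)
    (hf : ∀ x, f x = aℓ * x ℓ ^ qℓ + π (fun i => x i.1) + ar * x r ^ qr)
    (hpermℓ : PermutiveAt m d f ℓ) (hpermr : PermutiveAt m d f r) :
    ¬ Function.Injective (globalMap m d f) := by
  have : Fact (1 < m) := ⟨by omega⟩
  refine not_injective_globalMap_of_permutiveAt hlr (fun x y hxy => ?_) hpermℓ hpermr
  have hmid : (fun i : {i // ℓ < i ∧ i < r} => x i.1) = fun i => y i.1 :=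
    funext fun i => hxy i ⟨i.2.1.le, i.2.2.le⟩
  rw [hf, hf, hxy ℓ (left_mem_Icc.2 hlr.le), hxy r (right_mem_Icc.2 hlr.le), hmid]

/-- Let `m ≥ 3` and `F` an `LR`-separated CA over `ZMod m` with leftmost
position `ℓ` and rightmost position `r`, where `ℓ < r`, so the local rule is
`f(x) = aℓ * x_ℓ ^ qℓ + π(x_{ℓ+1},…,x_{r-1}) + ar * x_r ^ qr` with
`aℓ, ar ≠ 0` and `qℓ, qr ≥ 1`.  If `F` is permutive at position `ℓ` and at
position `r`, then `F` is not injective. -/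
theorem LRseparated_bipermutive_not_injective
    (m : ℕ) (hm : 3 ≤ m) (d : ℕ)
    (ℓ r : Fin (d + 1)) (hlr : ℓ < r)
    (aℓ ar : ZMod m) (haℓ : aℓ ≠ 0) (har : ar ≠ 0)
    (qℓ qr : ℕ) (hqℓ : 1 ≤ qℓ) (hqr : 1 ≤ qr)
    (π : ({i : Fin (d + 1) // ℓ < i ∧ i < r} → ZMod m) → ZMod m)
    (f : (Fin (d + 1) → ZMod m) → ZMod m)
    (hf : ∀ x, f x = aℓ * x ℓ ^ qℓ + π (fun i => x i.1) + ar * x r ^ qr)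
    (hpermℓ : PermutiveAt m d f ℓ) (hpermr : PermutiveAt m d f r) :
    ¬ Function.Injective (globalMap m d f) :=
  LRseparated_bipermutive_not_injective_general m hm d ℓ r hlr aℓ ar qℓ qr π f hf hpermℓ hpermr
end

section
/- Let F be the cellular automaton over ZMod 4 with diameter d = 2 and local rule f(a,b,c) = a² + b + c² (mod 4). Then the global map F is surjective, F is not permutive at position 1 (not left-permutive), and F is not permutive at position 3 (not right-permutive). -/
/-! Squares in `ZMod 4` only see parity: `a ^ 2` is `0` or `1` according as `a` is even or odd.
So to solve `x i ^ 2 + x (i + 1) + x (i + 2) ^ 2 = y i`, first choose parities `p : ℤ → ZMod 2`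
with `p i + p (i + 1) + p (i + 2) = y i mod 2` (a two-sided linear recurrence, always solvable),
then set `x (i + 1) = y i - p i - p (i + 2)`; the recurrence makes `x` have parity `p`.
Permutivity fails at both ends because `0 ^ 2 = 2 ^ 2`. -/

theorem exists_int_orbit_of_equiv {β : Type*} [Nonempty β] (e : ℤ → β ≃ β) :
    ∃ s : ℤ → β, ∀ i, s (i + 1) = e i (s i) := by
  obtain ⟨b⟩ := ‹Nonempty β›
  let s : ℤ → β := fun z => Int.inductionOn' (motive := fun _ => β) z 0 b
    (fun k _ x => e k x) (fun k _ x => (e (k - 1)).symm x)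
  refine ⟨s, fun i => ?_⟩
  rcases le_or_gt 0 i with hi | hi
  · exact Int.inductionOn'_add_one hi
  · have h : s (i + 1 - 1) = (e (i + 1 - 1)).symm (s (i + 1)) :=
      Int.inductionOn'_sub_one (by omega)
    rw [add_sub_cancel_right] at h
    rw [h, Equiv.apply_symm_apply]

theorem exists_add_add_shift_eq {G : Type*} [AddCommGroup G] (y : ℤ → G) :
    ∃ p : ℤ → G, ∀ i, p i + p (i + 1) + p (i + 2) = y i := by
  let step (i : ℤ) : G × G ≃ G × G :=
    { toFun := fun q => (q.2, y i - q.1 - q.2)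
      invFun := fun q => (y i - q.1 - q.2, q.1)
      left_inv := fun q => by ext <;> simp
      right_inv := fun q => by ext <;> simp; abel }
  obtain ⟨s, hs⟩ := exists_int_orbit_of_equiv step
  refine ⟨fun i => (s i).1, fun i => ?_⟩
  have h₁ := congrArg Prod.fst (hs i)
  have h₂ := congrArg Prod.snd (hs i)
  have h₃ := congrArg Prod.fst (hs (i + 1))
  simp only [step, Equiv.coe_fn_mk] at h₁ h₂ h₃
  simp only [show i + 2 = i + 1 + 1 by ring, h₃, h₂, h₁]
  abel

def parity : ZMod 4 →+* ZMod 2 := ZMod.castHom (by norm_num) _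

theorem sq_eq_parity_val (a : ZMod 4) : a ^ 2 = ((parity a).val : ZMod 4) := by
  revert a; decide

theorem parity_natCast_val (b : ZMod 2) : parity (b.val : ZMod 4) = b := by
  simp

theorem not_permutiveAt_of_eq {m d : ℕ} {f : (Fin (d + 1) → ZMod m) → ZMod m}
    {j : Fin (d + 1)} (x : Fin (d + 1) → ZMod m) {a b : ZMod m} (hab : a ≠ b)
    (h : f (Function.update x j a) = f (Function.update x j b)) :
    ¬ PermutiveAt m d f j :=
  fun hf => hab ((hf x).injective h)

theorem surjective_globalMap_sq_add_add_sq (f : (Fin 3 → ZMod 4) → ZMod 4)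
    (hf : ∀ x, f x = x 0 ^ 2 + x 1 + x 2 ^ 2) :
    Function.Surjective (globalMap 4 2 f) := by
  intro y
  obtain ⟨p, hp⟩ := exists_add_add_shift_eq (fun i => parity (y i))
  let lift (i : ℤ) : ZMod 4 := (p i).val
  let x (i : ℤ) : ZMod 4 := y (i - 1) - lift (i - 1) - lift (i + 1)
  have hx : ∀ i, parity (x i) = p i := fun i => by
    have := hp (i - 1)
    simp only [x, lift, map_sub, parity_natCast_val]
    rw [show i - 1 + 1 = i by ring, show i - 1 + 2 = i + 1 by ring] at this
    rw [← this]; abel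
  refine ⟨x, funext fun i => ?_⟩
  have hx₁ : x (i + 1) = y i - lift i - lift (i + 2) := by
    simp only [x, add_sub_cancel_right, show i + 1 + 1 = i + 2 by ring]
  rw [globalMap, hf]
  change x (i + 0) ^ 2 + x (i + 1) + x (i + 2) ^ 2 = y i
  rw [add_zero, hx₁, sq_eq_parity_val, sq_eq_parity_val, hx, hx]
  abel

/-- The CA over `ZMod 4` with diameter `2` and local rule
`f(a,b,c) = a² + b + c² (mod 4)` is surjective, but is neither permutive at
position `1` (left-permutive) nor at position `3` (right-permutive). -/
theorem zmod4_a2_b_c2_surjective_not_permutive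
    (f : (Fin 3 → ZMod 4) → ZMod 4)
    (hf : ∀ x, f x = x 0 ^ 2 + x 1 + x 2 ^ 2) :
    Function.Surjective (globalMap 4 2 f) ∧
      ¬ PermutiveAt 4 2 f 0 ∧ ¬ PermutiveAt 4 2 f 2 := by
  refine ⟨surjective_globalMap_sq_add_add_sq f hf,
    not_permutiveAt_of_eq 0 (a := 0) (b := 2) (by decide) ?_,
    not_permutiveAt_of_eq 0 (a := 0) (b := 2) (by decide) ?_⟩ <;>
  rw [hf, hf] <;> decide
end
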